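/- arXiv:1812.11583 — 10 statements merged into one kernel-verified Lean document; each statement's English description precedes it below -/
import Mathlib

section
/- Let K be a closed convex set in R^d and X ∈ K. Then the smallest face of K containing X equals K ∩ (X + pert_K(X)), where pert_K(X) is the set of directions A such that X ± tA ∈ K for all sufficiently small t > 0. -/
/-- A face of a convex set `K`: a convex subset `F ⊆ K` such that whenever a proper
convex combination of two points of `K` lies in `F`, both points lie in `F`. -/
def IsFace {d : ℕ} (K F : Set (EuclideanSpace ℝ (Fin d))) : Prop :=
  F ⊆ K ∧ Convex ℝ F ∧ ∀ x ∈ K, ∀ y ∈ K, ∀ θ : ℝ, 0 < θ → θ < 1 →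
    θ • x + (1 - θ) • y ∈ F → x ∈ F ∧ y ∈ F

/-- The perturbation of `X` in `K`: directions `A` with `X ± t • A ∈ K`
for all sufficiently small `t > 0`. -/
def pert {d : ℕ} (K : Set (EuclideanSpace ℝ (Fin d))) (X : EuclideanSpace ℝ (Fin d)) :
    Set (EuclideanSpace ℝ (Fin d)) :=
  {A | ∃ ε > (0 : ℝ), ∀ t : ℝ, 0 < t → t < ε → X + t • A ∈ K ∧ X - t • A ∈ K}

/-! Let `C` be the cone of directions `A` with `X + c • A ∈ K` for some `c > 0`. For convex `K`,
`pert_K(X) = C ∩ -C`, so `K ∩ (X + pert_K(X)) = {Y ∈ K | X - Y ∈ C}`. This set is a face: if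
`X - z ∈ C` for `z` strictly between `x, y ∈ K`, then `X - x` is a positive combination of `X - z`
and `y - X`, hence in `C`. It lies in every face `F ∋ X`: if `X + c • (X - Y) ∈ K`, then `X` is
strictly between that point and `Y`, so `Y ∈ F`. -/

open Set

section FeasibleCone

variable (𝕜 : Type*) {E : Type*} [Field 𝕜] [LinearOrder 𝕜] [AddCommGroup E] [Module 𝕜 E]

def feasibleCone (K : Set E) (X : E) : ConvexCone 𝕜 E :=
  ConvexCone.hull 𝕜 ((X + ·) ⁻¹' K)

variable {𝕜} {K : Set E} {X : E}

theorem sub_mem_feasibleCone {Y : E} (hY : Y ∈ K) : Y - X ∈ feasibleCone 𝕜 K X :=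
  ConvexCone.subset_hull (by simpa using hY)

variable [IsStrictOrderedRing 𝕜]

theorem mem_feasibleCone (hK : Convex 𝕜 K) {A : E} :
    A ∈ feasibleCone 𝕜 K X ↔ ∃ c : 𝕜, 0 < c ∧ X + c • A ∈ K := by
  rw [feasibleCone, ConvexCone.mem_hull_of_convex (hK.translate_preimage_right X)]
  constructor
  · rintro ⟨r, hr, hA⟩
    exact ⟨r⁻¹, inv_pos.2 hr, (mem_smul_set_iff_inv_smul_mem₀ hr.ne' _ _).1 hA⟩
  · rintro ⟨c, hc, hA⟩
    refine ⟨c⁻¹, inv_pos.2 hc, (mem_smul_set_iff_inv_smul_mem₀ (inv_ne_zero hc.ne') _ _).2 ?_⟩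
    rwa [inv_inv]

/-- `X - x` is a positive combination of `X - z` and `y - X`. -/
theorem sub_mem_feasibleCone_of_mem_openSegment {x y z : E} (hy : y ∈ K)
    (hz : z ∈ openSegment 𝕜 x y) (h : X - z ∈ feasibleCone 𝕜 K X) :
    X - x ∈ feasibleCone 𝕜 K X := by
  obtain ⟨a, b, ha, hb, hab, rfl⟩ := hz
  obtain rfl : b = 1 - a := eq_sub_of_add_eq' hab
  have hcomb : X - x = a⁻¹ • (X - (a • x + (1 - a) • y)) + ((1 - a) / a) • (y - X) := by
    match_scalars <;> field_simp <;> ring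
  rw [hcomb]
  exact add_mem (ConvexCone.smul_mem _ (inv_pos.2 ha) h)
    (ConvexCone.smul_mem _ (div_pos hb ha) (sub_mem_feasibleCone hy))

end FeasibleCone

section Faces

variable {d : ℕ} {K : Set (EuclideanSpace ℝ (Fin d))} {X : EuclideanSpace ℝ (Fin d)}

theorem mem_pert_iff (hK : Convex ℝ K) (hX : X ∈ K) {A : EuclideanSpace ℝ (Fin d)} :
    A ∈ pert K X ↔ A ∈ feasibleCone ℝ K X ∧ -A ∈ feasibleCone ℝ K X := by
  simp only [mem_feasibleCone hK, smul_neg, ← sub_eq_add_neg]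
  constructor
  · rintro ⟨ε, hε, h⟩
    obtain ⟨hplus, hminus⟩ := h (ε / 2) (half_pos hε) (half_lt_self hε)
    exact ⟨⟨_, half_pos hε, hplus⟩, ⟨_, half_pos hε, hminus⟩⟩
  · rintro ⟨⟨a, ha, hplus⟩, ⟨b, hb, hminus⟩⟩
    refine ⟨min a b, lt_min ha hb, fun t ht htab => ⟨?_, ?_⟩⟩
    · have := hK.add_smul_mem hX hplus
        ⟨div_nonneg ht.le ha.le, (div_le_one ha).2 (htab.le.trans (min_le_left a b))⟩
      rwa [smul_smul, div_mul_cancel₀ t ha.ne'] at this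
    · have := hK.add_smul_mem hX (y := b • -A) (by rwa [smul_neg, ← sub_eq_add_neg])
        ⟨div_nonneg ht.le hb.le, (div_le_one hb).2 (htab.le.trans (min_le_right a b))⟩
      rwa [smul_smul, div_mul_cancel₀ t hb.ne', smul_neg, ← sub_eq_add_neg] at this

theorem mem_inter_pert_iff (hK : Convex ℝ K) (hX : X ∈ K) {Y : EuclideanSpace ℝ (Fin d)} :
    Y ∈ K ∩ {Y | Y - X ∈ pert K X} ↔ Y ∈ K ∧ X - Y ∈ feasibleCone ℝ K X := by
  simp only [mem_inter_iff, mem_ofPred_eq, mem_pert_iff hK hX, neg_sub]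
  exact ⟨fun h => ⟨h.1, h.2.2⟩, fun h => ⟨h.1, sub_mem_feasibleCone h.1, h.2⟩⟩

theorem isFace_inter_pert (hK : Convex ℝ K) (hX : X ∈ K) :
    IsFace K (K ∩ {Y | Y - X ∈ pert K X}) := by
  simp only [IsFace, Convex, StarConvex, mem_inter_pert_iff hK hX]
  refine ⟨fun Y hY => hY.1, ?_, ?_⟩
  · rintro Y₁ ⟨hY₁, hXY₁⟩ Y₂ ⟨hY₂, hXY₂⟩ a b ha hb hab
    refine ⟨hK hY₁ hY₂ ha hb hab, ?_⟩
    have hcomb : X - (a • Y₁ + b • Y₂) = a • (X - Y₁) + b • (X - Y₂) := by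
      rw [eq_sub_of_add_eq hab]
      module
    rw [hcomb]
    exact (feasibleCone ℝ K X).convex hXY₁ hXY₂ ha hb hab
  · rintro x hx y hy θ hθ₀ hθ₁ ⟨-, hz⟩
    have hseg : θ • x + (1 - θ) • y ∈ openSegment ℝ x y :=
      ⟨θ, 1 - θ, hθ₀, sub_pos.2 hθ₁, add_sub_cancel θ 1, rfl⟩
    exact ⟨⟨hx, sub_mem_feasibleCone_of_mem_openSegment hy hseg hz⟩,
      ⟨hy, sub_mem_feasibleCone_of_mem_openSegment hx (openSegment_symm ℝ x y ▸ hseg) hz⟩⟩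

/-- `X` lies strictly inside the segment from `X - c • (Y - X)` to `Y`. -/
theorem IsFace.mem_of_sub_smul_mem {F : Set (EuclideanSpace ℝ (Fin d))} (hF : IsFace K F)
    (hXF : X ∈ F) {Y : EuclideanSpace ℝ (Fin d)} (hY : Y ∈ K) {c : ℝ} (hc : 0 < c)
    (h : X - c • (Y - X) ∈ K) : Y ∈ F := by
  have hX : (1 + c)⁻¹ • (X - c • (Y - X)) + (1 - (1 + c)⁻¹) • Y = X := by
    match_scalars <;> field_simp <;> ring
  exact (hF.2.2 _ h _ hY _ (by positivity) (inv_lt_one_of_one_lt₀ (by linarith))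
    (hX ▸ hXF)).2

theorem IsFace.inter_pert_subset {F : Set (EuclideanSpace ℝ (Fin d))} (hF : IsFace K F)
    (hXF : X ∈ F) : K ∩ {Y | Y - X ∈ pert K X} ⊆ F := by
  rintro Y ⟨hY, ε, hε, h⟩
  exact hF.mem_of_sub_smul_mem hXF hY (half_pos hε) (h _ (half_pos hε) (half_lt_self hε)).2

end Faces

theorem smallestFace_eq_inter_pert_general {d : ℕ} (K : Set (EuclideanSpace ℝ (Fin d)))
    (hconv : Convex ℝ K)
    (X : EuclideanSpace ℝ (Fin d)) (hX : X ∈ K) :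
    ⋂₀ {F | IsFace K F ∧ X ∈ F} = K ∩ {Y | Y - X ∈ pert K X} := by
  have hXmem : X ∈ K ∩ {Y | Y - X ∈ pert K X} :=
    (mem_inter_pert_iff hconv hX).2 ⟨hX, sub_mem_feasibleCone hX⟩
  exact Subset.antisymm (sInter_subset_of_mem ⟨isFace_inter_pert hconv hX, hXmem⟩)
    (subset_sInter fun F ⟨hF, hXF⟩ => hF.inter_pert_subset hXF)

/-- The smallest face of `K` containing `X` equals `K ∩ (X + pert_K(X))`. -/
theorem smallestFace_eq_inter_pert {d : ℕ} (K : Set (EuclideanSpace ℝ (Fin d)))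
    (hK : IsClosed K) (hconv : Convex ℝ K)
    (X : EuclideanSpace ℝ (Fin d)) (hX : X ∈ K) :
    ⋂₀ {F | IsFace K F ∧ X ∈ F} = K ∩ {Y | Y - X ∈ pert K X} :=
  smallestFace_eq_inter_pert_general K hconv X hX
end

section
/- Welch bound: If v_1, ..., v_N are unit vectors in R^r with N > r (more generally N ≥ 1), then max_{i ≠ j} |⟨v_i, v_j⟩| ≥ sqrt((N − r)/(r(N − 1))). -/
/-!
Expanding `⟪v i, v j⟫` in an orthonormal basis turns `∑ i j, ⟪v i, v j⟫ ^ 2` into the squared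
Frobenius norm of the frame operator `S = ∑ i, v i ⊗ v i`, whose trace is `∑ i, ‖v i‖ ^ 2 = N`.
Cauchy–Schwarz on the `r` diagonal entries of `S` gives `N ^ 2 ≤ r ∑ i j, ⟪v i, v j⟫ ^ 2`, while
the `N` diagonal terms equal `1` and the `N (N - 1)` others are at most `c ^ 2`, with `c` the
largest off-diagonal `|⟪v i, v j⟫|`.
-/

open Finset Module RealInnerProductSpace

section Coordinates

variable {ι κ : Type*} [Fintype ι] [Fintype κ]

theorem sum_sq_sum_mul_eq_sum_sq_sum_mul (x : ι → κ → ℝ) :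
    ∑ i, ∑ j, (∑ a, x i a * x j a) ^ 2 = ∑ a, ∑ b, (∑ i, x i a * x i b) ^ 2 := by
  simp only [sq, sum_mul_sum]
  calc _ = ∑ i, ∑ a, ∑ j, ∑ b, x i a * x j a * (x i b * x j b) :=
        sum_congr rfl fun _ _ => sum_comm
    _ = ∑ a, ∑ i, ∑ b, ∑ j, x i a * x j a * (x i b * x j b) :=
        sum_comm.trans (sum_congr rfl fun _ _ => sum_congr rfl fun _ _ => sum_comm)
    _ = _ := sum_congr rfl fun _ _ => sum_comm.trans (by simp only [mul_mul_mul_comm])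

theorem sq_sum_sum_mul_self_le (x : ι → κ → ℝ) :
    (∑ i, ∑ a, x i a * x i a) ^ 2 ≤ Fintype.card κ * ∑ i, ∑ j, (∑ a, x i a * x j a) ^ 2 := by
  set M : κ → κ → ℝ := fun a b => ∑ i, x i a * x i b
  have hdiag : ∑ a, M a a ^ 2 ≤ ∑ a, ∑ b, M a b ^ 2 :=
    sum_le_sum fun a _ => single_le_sum (f := fun b => M a b ^ 2) (fun _ _ => sq_nonneg _)
      (mem_univ a)
  calc (∑ i, ∑ a, x i a * x i a) ^ 2 = (∑ a, M a a) ^ 2 := by rw [sum_comm]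
    _ ≤ Fintype.card κ * ∑ a, M a a ^ 2 := sq_sum_le_card_mul_sum_sq
    _ ≤ Fintype.card κ * ∑ a, ∑ b, M a b ^ 2 := by gcongr
    _ = _ := by rw [sum_sq_sum_mul_eq_sum_sq_sum_mul]

end Coordinates

variable {ι E : Type*} [Fintype ι] [NormedAddCommGroup E] [InnerProductSpace ℝ E]

theorem sq_sum_norm_sq_le_finrank_mul_sum_sq_inner [FiniteDimensional ℝ E] (v : ι → E) :
    (∑ i, ‖v i‖ ^ 2) ^ 2 ≤ finrank ℝ E * ∑ i, ∑ j, ⟪v i, v j⟫ ^ 2 := by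
  let b := stdOrthonormalBasis ℝ E
  have hinner : ∀ i j, ∑ a, ⟪b a, v i⟫ * ⟪b a, v j⟫ = ⟪v i, v j⟫ := fun i j => by
    simp_rw [← b.sum_inner_mul_inner (v i) (v j), real_inner_comm (v i)]
  simpa only [hinner, real_inner_self_eq_norm_sq, Fintype.card_fin] using
    sq_sum_sum_mul_self_le fun i a => ⟪b a, v i⟫

theorem sum_sq_inner_le_of_abs_inner_le (v : ι → E) (hv : ∀ i, ‖v i‖ = 1) {c : ℝ}
    (hc : ∀ i j, i ≠ j → |⟪v i, v j⟫| ≤ c) (i : ι) :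
    ∑ j, ⟪v i, v j⟫ ^ 2 ≤ 1 + (Fintype.card ι - 1) * c ^ 2 := by
  classical
  rw [← add_sum_erase _ _ (mem_univ i), real_inner_self_eq_norm_sq, hv, one_pow, one_pow]
  grw [sum_le_card_nsmul _ _ (c ^ 2) fun j hj => ?_]
  · rw [card_erase_of_mem (mem_univ i), card_univ, nsmul_eq_mul,
      Nat.cast_pred (Fintype.card_pos_iff.2 ⟨i⟩)]
  · rw [← sq_abs]
    exact pow_le_pow_left₀ (abs_nonneg _) (hc i j (ne_of_mem_erase hj).symm) 2

theorem welch_div_le_sq_of_abs_inner_le [FiniteDimensional ℝ E] [Nonempty ι] (v : ι → E)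
    (hv : ∀ i, ‖v i‖ = 1) {c : ℝ} (hc : ∀ i j, i ≠ j → |⟪v i, v j⟫| ≤ c) :
    ((Fintype.card ι : ℝ) - finrank ℝ E) / (finrank ℝ E * ((Fintype.card ι : ℝ) - 1)) ≤ c ^ 2 := by
  set N : ℝ := (Fintype.card ι : ℝ)
  set r : ℝ := (finrank ℝ E : ℝ)
  have hN : 1 ≤ N := Nat.one_le_cast.2 Fintype.card_pos
  have hr : 0 ≤ r := Nat.cast_nonneg _
  have hframe := sq_sum_norm_sq_le_finrank_mul_sum_sq_inner v
  simp only [hv, one_pow, sum_const, card_univ, nsmul_one] at hframe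
  have hrows : ∑ i, ∑ j, ⟪v i, v j⟫ ^ 2 ≤ N * (1 + (N - 1) * c ^ 2) :=
    (sum_le_sum fun i _ => sum_sq_inner_le_of_abs_inner_le v hv hc i).trans_eq <| by
      rw [sum_const, card_univ, nsmul_eq_mul]
  have hNr : N * N ≤ N * (r * (1 + (N - 1) * c ^ 2)) := by
    linarith [mul_le_mul_of_nonneg_left hrows hr]
  refine div_le_of_le_mul₀ (mul_nonneg hr (by linarith)) (sq_nonneg c) ?_
  linarith [le_of_mul_le_mul_left hNr (by linarith)]

theorem welch_bound_general (N r : ℕ) (hN : 2 ≤ N)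
    (v : Fin N → EuclideanSpace ℝ (Fin r)) (hv : ∀ i, ‖v i‖ = 1) :
    ∃ i j : Fin N, i ≠ j ∧
      Real.sqrt (((N : ℝ) - r) / (r * ((N : ℝ) - 1))) ≤ |(inner ℝ (v i) (v j) : ℝ)| := by
  have : Nontrivial (Fin N) := Fin.nontrivial_iff_two_le.2 hN
  obtain ⟨a, b, hab⟩ := exists_pair_ne (Fin N)
  obtain ⟨⟨i, j⟩, hij, hmax⟩ := univ.offDiag.exists_max_image (fun p => |⟪v p.1, v p.2⟫|)
    ⟨(a, b), mem_offDiag.2 ⟨mem_univ a, mem_univ b, hab⟩⟩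
  refine ⟨i, j, (mem_offDiag.1 hij).2.2, (Real.sqrt_le_left (abs_nonneg _)).2 ?_⟩
  have := welch_div_le_sq_of_abs_inner_le v hv fun k l hkl => hmax (k, l) (by simpa using hkl)
  rwa [Fintype.card_fin, finrank_euclideanSpace_fin] at this

/-- Welch bound: for `N ≥ 2` unit vectors in `ℝ^r`, some pair `i ≠ j` has
`|⟨v_i, v_j⟩| ≥ sqrt((N - r) / (r (N - 1)))`. -/
theorem welch_bound (N r : ℕ) (hr : 0 < r) (hN : 2 ≤ N)
    (v : Fin N → EuclideanSpace ℝ (Fin r)) (hv : ∀ i, ‖v i‖ = 1) :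
    ∃ i j : Fin N, i ≠ j ∧
      Real.sqrt (((N : ℝ) - r) / (r * ((N : ℝ) - 1))) ≤ |(inner ℝ (v i) (v j) : ℝ)| :=
  welch_bound_general N r hN v hv
end

section
/- Gerzon bound: If v_1, ..., v_N are unit vectors in R^r such that |⟨v_i, v_j⟩| = α for all i ≠ j with some fixed α < 1, then N ≤ r(r+1)/2. -/
/-!
The rank-one symmetric matrices `v i (v i)ᵀ` are linearly independent in the space of symmetric
`r × r` matrices, which has dimension `r(r+1)/2`. Indeed, pairing a vanishing combination
`∑ c i • v i (v i)ᵀ` with `v j (v j)ᵀ` gives `(1 - α²) c j + α² ∑ c i = 0` for every `j`, and the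
matrix `(1 - α²) I + α² J` is positive definite because `0 ≤ α² < 1`.
-/

open Finset RealInnerProductSpace

/-- The matrix `x xᵀ`, as a point of the space `Sym2 n → ℝ` of symmetric matrices. -/
noncomputable def symOuter {n : Type*} (x : EuclideanSpace ℝ n) : Sym2 n → ℝ :=
  Sym2.lift ⟨fun a b => x a * x b, fun _ _ => mul_comm _ _⟩

@[simp]
theorem symOuter_mk {n : Type*} (x : EuclideanSpace ℝ n) (a b : n) :
    symOuter x s(a, b) = x a * x b :=
  rfl

section

variable {n ι : Type*} [Fintype n] [Fintype ι]

theorem inner_sq_eq_sum_symOuter (x w : EuclideanSpace ℝ n) :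
    ⟪x, w⟫ ^ 2 = ∑ a, ∑ b, symOuter x s(a, b) * (w a * w b) := by
  simp only [PiLp.inner_apply, RCLike.inner_apply, conj_trivial, sq, sum_mul_sum, symOuter_mk]
  exact sum_congr rfl fun _ _ => sum_congr rfl fun _ _ => by ring

theorem sum_mul_inner_sq_eq_zero_of_sum_smul_symOuter_eq_zero (c : ι → ℝ)
    (v : ι → EuclideanSpace ℝ n) (h : ∑ i, c i • symOuter (v i) = 0) (w : EuclideanSpace ℝ n) :
    ∑ i, c i * ⟪v i, w⟫ ^ 2 = 0 := by
  have hab (a b : n) : ∑ i, c i * symOuter (v i) s(a, b) = 0 := by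
    simpa using congrFun h s(a, b)
  simp_rw [inner_sq_eq_sum_symOuter, mul_sum, ← mul_assoc]
  rw [sum_comm]
  refine sum_eq_zero fun a _ => ?_
  rw [sum_comm]
  simp only [← sum_mul, hab, zero_mul, sum_const_zero]

theorem sum_mul_inner_sq_of_equiangular (v : ι → EuclideanSpace ℝ n) (hv : ∀ i, ‖v i‖ = 1)
    {β : ℝ} (hβ : ∀ i j, i ≠ j → ⟪v i, v j⟫ ^ 2 = β) (c : ι → ℝ) (j : ι) :
    ∑ i, c i * ⟪v i, v j⟫ ^ 2 = (1 - β) * c j + β * ∑ i, c i := by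
  classical
  have hsq (i : ι) : ⟪v i, v j⟫ ^ 2 = β + (1 - β) * if i = j then 1 else 0 := by
    split_ifs with hij
    · rw [hij, real_inner_self_eq_norm_sq, hv]; ring
    · rw [hβ i j hij]; ring
  simp_rw [hsq, mul_add, sum_add_distrib, ← mul_assoc, mul_comm _ (1 - β), mul_assoc,
    ← mul_sum, mul_ite, mul_one, mul_zero, sum_ite_eq', mem_univ, if_true, mul_comm (c _) β,
    ← mul_sum]
  ring

theorem eq_zero_of_forall_one_sub_mul_add_mul_sum_eq_zero {β : ℝ} (hβ0 : 0 ≤ β) (hβ1 : β < 1)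
    (c : ι → ℝ) (h : ∀ j, (1 - β) * c j + β * ∑ i, c i = 0) : c = 0 := by
  have hquad : (1 - β) * ∑ j, c j ^ 2 + β * (∑ j, c j) ^ 2 = 0 := by
    calc (1 - β) * ∑ j, c j ^ 2 + β * (∑ j, c j) ^ 2
        = ∑ j, ((1 - β) * c j ^ 2 + c j * (β * ∑ i, c i)) := by
          rw [sum_add_distrib, ← mul_sum, ← sum_mul]; ring
      _ = ∑ j, c j * ((1 - β) * c j + β * ∑ i, c i) := sum_congr rfl fun _ _ => by ring
      _ = 0 := sum_eq_zero fun j _ => by rw [h j, mul_zero]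
  have hsq : ∑ j, c j ^ 2 = 0 := by
    nlinarith [sum_nonneg fun j (_ : j ∈ univ) => sq_nonneg (c j), sq_nonneg (∑ j, c j)]
  funext j
  exact pow_eq_zero_iff two_ne_zero |>.mp <|
    (sum_eq_zero_iff_of_nonneg fun i _ => sq_nonneg (c i)).mp hsq j (mem_univ j)

theorem linearIndependent_symOuter_of_equiangular (v : ι → EuclideanSpace ℝ n)
    (hv : ∀ i, ‖v i‖ = 1) {β : ℝ} (hβ0 : 0 ≤ β) (hβ1 : β < 1)
    (hβ : ∀ i j, i ≠ j → ⟪v i, v j⟫ ^ 2 = β) :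
    LinearIndependent ℝ fun i => symOuter (v i) := by
  rw [Fintype.linearIndependent_iff]
  intro c hc
  refine congrFun (eq_zero_of_forall_one_sub_mul_add_mul_sum_eq_zero hβ0 hβ1 c fun j => ?_)
  rw [← sum_mul_inner_sq_of_equiangular v hv hβ c j]
  exact sum_mul_inner_sq_eq_zero_of_sum_smul_symOuter_eq_zero c v hc (v j)

theorem card_le_choose_of_equiangular (v : ι → EuclideanSpace ℝ n)
    (hv : ∀ i, ‖v i‖ = 1) {β : ℝ} (hβ0 : 0 ≤ β) (hβ1 : β < 1)
    (hβ : ∀ i j, i ≠ j → ⟪v i, v j⟫ ^ 2 = β) :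
    Fintype.card ι ≤ (Fintype.card n + 1).choose 2 := by
  have := (linearIndependent_symOuter_of_equiangular v hv hβ0 hβ1 hβ).fintype_card_le_finrank
  rwa [Module.finrank_fintype_fun_eq_card, Sym2.card] at this

end

/-- Gerzon bound: `N` equiangular unit vectors in `ℝ^r` (with common angle `α < 1`)
satisfy `N ≤ r(r+1)/2`, i.e. `2N ≤ r(r+1)`. -/
theorem gerzon_bound (N r : ℕ) (v : Fin N → EuclideanSpace ℝ (Fin r))
    (hv : ∀ i, ‖v i‖ = 1) (α : ℝ) (hα : α < 1)
    (heq : ∀ i j, i ≠ j → |(inner ℝ (v i) (v j) : ℝ)| = α) :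
    2 * N ≤ r * (r + 1) := by
  obtain ⟨β, hβ0, hβ1, hβ⟩ : ∃ β : ℝ, 0 ≤ β ∧ β < 1 ∧ ∀ i j, i ≠ j → ⟪v i, v j⟫ ^ 2 = β := by
    by_cases hα0 : 0 ≤ α
    · exact ⟨α ^ 2, sq_nonneg α, by nlinarith, fun i j hij => by rw [← heq i j hij, sq_abs]⟩
    · exact ⟨0, le_rfl, one_pos, fun i j hij => absurd (heq i j hij ▸ abs_nonneg _) hα0⟩
  have hN := card_le_choose_of_equiangular v hv hβ0 hβ1 hβ
  rw [Fintype.card_fin, Fintype.card_fin, Nat.choose_two_right, Nat.add_sub_cancel] at hN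
  have := Nat.div_mul_cancel (Nat.even_mul_succ_self r).two_dvd
  rw [mul_comm (r + 1)] at hN
  omega
end

section
/- If v_1, ..., v_N are unit vectors in R^r with |⟨v_i, v_j⟩| = α < 1 for all i ≠ j, then the rank-one matrices v_i v_i^T are linearly independent in the space of symmetric r × r matrices. -/
/-!
If `∑ cᵢ vᵢvᵢᵀ = 0`, evaluating the quadratic form at each `vⱼ` gives `∑ᵢ cᵢ ⟨vᵢ, vⱼ⟩² = 0`, so `c`
lies in the kernel of the entrywise square of the Gram matrix. For equiangular unit vectors that
matrix is `(1 - α²) I + α² J`, which is positive definite when `0 ≤ α < 1`, hence `c = 0`.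
-/

open Matrix

namespace Matrix

variable {ι n : Type*} [Fintype ι] [DecidableEq ι]

theorem linearIndependent_vecMulVec_self_of_isUnit {K : Type*} [Field K] [Fintype n]
    (u : ι → n → K) (h : IsUnit (of fun i j => (u i ⬝ᵥ u j) ^ 2)) :
    LinearIndependent K fun i => vecMulVec (u i) (u i) := by
  rw [Fintype.linearIndependent_iff]
  intro c hc
  have hker : (of fun i j => (u i ⬝ᵥ u j) ^ 2) *ᵥ c = 0 := by
    ext j
    have := congrArg (fun M => u j ⬝ᵥ (M *ᵥ u j)) hc
    simp only [sum_mulVec, dotProduct_sum, smul_mulVec, vecMulVec_mulVec, dotProduct_smul] at this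
    simpa [mulVec, dotProduct, sq, dotProduct_comm (u j), mul_comm, mul_left_comm] using this
  exact congrFun (mulVec_injective_iff_isUnit.2 h (hker.trans (mulVec_zero _).symm))

theorem posDef_smul_one_add_smul_vecMulVec_one {R : Type*} [CommRing R] [PartialOrder R]
    [IsStrictOrderedRing R] [StarRing R] [StarOrderedRing R] [NoZeroDivisors R] {a b : R}
    (ha : 0 < a) (hb : 0 ≤ b) : (a • 1 + b • vecMulVec 1 1 : Matrix ι ι R).PosDef := by
  have hJ := posSemidef_vecMulVec_self_star (1 : ι → R)
  rw [star_one] at hJ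
  exact (PosDef.one.smul ha).add_posSemidef (hJ.smul hb)

end Matrix

theorem posDef_inner_sq_of_equiangular {ι E : Type*} [Fintype ι] [DecidableEq ι]
    [NormedAddCommGroup E] [InnerProductSpace ℝ E] (v : ι → E) (hv : ∀ i, ‖v i‖ = 1) {α : ℝ}
    (hα₀ : 0 ≤ α) (hα : α < 1) (heq : ∀ i j, i ≠ j → |(inner ℝ (v i) (v j) : ℝ)| = α) :
    (of fun i j => (inner ℝ (v i) (v j) : ℝ) ^ 2).PosDef := by
  have hgram : (of fun i j => (inner ℝ (v i) (v j) : ℝ) ^ 2)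
      = (1 - α ^ 2) • 1 + α ^ 2 • vecMulVec 1 1 := by
    ext i j
    rcases eq_or_ne i j with rfl | hij
    · simp [hv]
    · simp [hij, ← sq_abs, heq i j hij]
  rw [hgram]
  exact posDef_smul_one_add_smul_vecMulVec_one (sub_pos.2 (pow_lt_one₀ hα₀ hα two_ne_zero))
    (sq_nonneg α)

/-- The outer products `v_i v_i^T` of equiangular unit vectors (angle `α < 1`)
are linearly independent. -/
theorem equiangular_outer_linearIndependent (N r : ℕ)
    (v : Fin N → EuclideanSpace ℝ (Fin r)) (hv : ∀ i, ‖v i‖ = 1)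
    (α : ℝ) (hα : α < 1)
    (heq : ∀ i j, i ≠ j → |(inner ℝ (v i) (v j) : ℝ)| = α) :
    LinearIndependent ℝ
      (fun i : Fin N => Matrix.of fun a b : Fin r => v i a * v i b) := by
  -- For `N ≤ 1` the angle condition is vacuous and `α` may be negative; `max α 0` is an angle in
  -- every case.
  have hβ : ∀ i j, i ≠ j → |(inner ℝ (v i) (v j) : ℝ)| = max α 0 := fun i j hij => by
    rw [heq i j hij, max_eq_left (heq i j hij ▸ abs_nonneg _)]
  have hpos := posDef_inner_sq_of_equiangular v hv (le_max_right α 0) (max_lt hα one_pos) hβ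
  refine linearIndependent_vecMulVec_self_of_isUnit (fun i => WithLp.ofLp (v i)) ?_
  simpa [EuclideanSpace.inner_eq_star_dotProduct, dotProduct_comm] using hpos.isUnit
end

section
/- Let M be a symmetric psd rN × rN block matrix with M_{[ii]} = I_r, and suppose Mv = Nv where v ≠ 0 is the concatenation of v_1, ..., v_N ∈ R^r. Then all the norms ‖v_i‖ are equal and M_{[ij]} v_j = v_i for all i, j. -/
/-!
Write `B i j` for the blocks of `M`. Positive semidefiniteness, tested on `x` in block `i` minus
`y` in block `j`, gives `2 ⟪x, B i j y⟫ ≤ ‖x‖² + ‖y‖²`. Hence `B i j` is a contraction and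
`‖v i - B i j v j‖² ≤ ‖v i‖² + ‖v j‖² - 2 ⟪v i, B i j v j⟫`. Summed over all `i, j`, the right-hand
side is `2 N ‖v‖² - 2 ⟪v, M v⟫ = 0` by the eigenvalue equation, so `B i j v j = v i`; since `B i j`
is a contraction this also gives `‖v i‖ ≤ ‖v j‖`.
-/

open Matrix

namespace Matrix

variable {n ι κ : Type*} [Fintype n] [Fintype ι] [Fintype κ]

theorem PosSemidef.two_mul_dotProduct_mulVec_le {M : Matrix n n ℝ} (hM : M.PosSemidef)
    (x y : n → ℝ) : 2 * (x ⬝ᵥ M *ᵥ y) ≤ x ⬝ᵥ M *ᵥ x + y ⬝ᵥ M *ᵥ y := by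
  have hsymm : y ⬝ᵥ M *ᵥ x = x ⬝ᵥ M *ᵥ y := by
    rw [← dotProduct_transpose_mulVec, ← conjTranspose_eq_transpose_of_trivial, hM.1]
  have hnonneg := hM.dotProduct_mulVec_nonneg (x - y)
  simp only [star_trivial, mulVec_sub, dotProduct_sub, sub_dotProduct, hsymm] at hnonneg
  linarith

theorem mulVec_dotProduct_mulVec_le_of_forall {A : Matrix κ κ ℝ} {y : κ → ℝ}
    (h : ∀ x, 2 * (x ⬝ᵥ A *ᵥ y) ≤ x ⬝ᵥ x + y ⬝ᵥ y) : A *ᵥ y ⬝ᵥ A *ᵥ y ≤ y ⬝ᵥ y := by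
  linarith [h (A *ᵥ y)]

theorem sub_mulVec_dotProduct_self_le_of_forall {A : Matrix κ κ ℝ} {y : κ → ℝ}
    (h : ∀ x, 2 * (x ⬝ᵥ A *ᵥ y) ≤ x ⬝ᵥ x + y ⬝ᵥ y) (x : κ → ℝ) :
    (x - A *ᵥ y) ⬝ᵥ (x - A *ᵥ y) ≤ x ⬝ᵥ x + y ⬝ᵥ y - 2 * (x ⬝ᵥ A *ᵥ y) := by
  have hA := mulVec_dotProduct_mulVec_le_of_forall h
  simp only [dotProduct_sub, sub_dotProduct, dotProduct_comm (A *ᵥ y) x] at *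
  linarith

def block (M : Matrix (ι × κ) (ι × κ) ℝ) (i j : ι) : Matrix κ κ ℝ :=
  of fun a b => M (i, a) (j, b)

theorem uncurry_dotProduct_self (u : ι → κ → ℝ) :
    Function.uncurry u ⬝ᵥ Function.uncurry u = ∑ i, u i ⬝ᵥ u i := by
  simp [dotProduct, Fintype.sum_prod_type]

theorem uncurry_dotProduct_mulVec_uncurry (M : Matrix (ι × κ) (ι × κ) ℝ) (u w : ι → κ → ℝ) :
    Function.uncurry u ⬝ᵥ M *ᵥ Function.uncurry w =
      ∑ i, ∑ j, u i ⬝ᵥ block M i j *ᵥ w j := by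
  simp only [dotProduct, mulVec, block, Fintype.sum_prod_type, Function.uncurry_apply_pair,
    of_apply, Finset.mul_sum]
  exact Finset.sum_congr rfl fun i _ => Finset.sum_comm

theorem uncurry_single_dotProduct_mulVec_uncurry_single [DecidableEq ι]
    (M : Matrix (ι × κ) (ι × κ) ℝ) (i j : ι) (x y : κ → ℝ) :
    Function.uncurry (Pi.single i x) ⬝ᵥ M *ᵥ Function.uncurry (Pi.single j y) =
      x ⬝ᵥ block M i j *ᵥ y := by
  rw [uncurry_dotProduct_mulVec_uncurry, Fintype.sum_eq_single i fun i' hi' => by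
      simp [Pi.single_eq_of_ne hi'],
    Fintype.sum_eq_single j fun j' hj' => by simp [Pi.single_eq_of_ne hj']]
  simp

theorem PosSemidef.two_mul_dotProduct_block_mulVec_le [DecidableEq ι] [DecidableEq κ]
    {M : Matrix (ι × κ) (ι × κ) ℝ} (hM : M.PosSemidef) (hdiag : ∀ i, block M i i = 1)
    (i j : ι) (x y : κ → ℝ) : 2 * (x ⬝ᵥ block M i j *ᵥ y) ≤ x ⬝ᵥ x + y ⬝ᵥ y := by
  have key := hM.two_mul_dotProduct_mulVec_le (Function.uncurry (Pi.single i x))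
    (Function.uncurry (Pi.single j y))
  simpa [uncurry_single_dotProduct_mulVec_uncurry_single, hdiag] using key

section Eigenvector

variable [DecidableEq ι] [DecidableEq κ] {M : Matrix (ι × κ) (ι × κ) ℝ}

theorem block_mulVec_eq_of_mulVec_eq_card_smul (hM : M.PosSemidef) (hdiag : ∀ i, block M i i = 1)
    {u : ι → κ → ℝ} (heig : M *ᵥ Function.uncurry u = (Fintype.card ι : ℝ) • Function.uncurry u)
    (i j : ι) : block M i j *ᵥ u j = u i := by
  set defect : ι → ι → ℝ := fun i j => (u i - block M i j *ᵥ u j) ⬝ᵥ (u i - block M i j *ᵥ u j)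
  have hdefect_le (i j : ι) :
      defect i j ≤ u i ⬝ᵥ u i + u j ⬝ᵥ u j - 2 * (u i ⬝ᵥ block M i j *ᵥ u j) :=
    sub_mulVec_dotProduct_self_le_of_forall
      (fun x => hM.two_mul_dotProduct_block_mulVec_le hdiag i j x (u j)) (u i)
  have hcross : ∑ i, ∑ j, u i ⬝ᵥ block M i j *ᵥ u j = Fintype.card ι * ∑ i, u i ⬝ᵥ u i := by
    rw [← uncurry_dotProduct_mulVec_uncurry, heig, dotProduct_smul, uncurry_dotProduct_self,
      smul_eq_mul]
  have hbound_sum :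
      ∑ i, ∑ j, (u i ⬝ᵥ u i + u j ⬝ᵥ u j - 2 * (u i ⬝ᵥ block M i j *ᵥ u j)) = 0 := by
    simp only [Finset.sum_sub_distrib, Finset.sum_add_distrib, ← Finset.mul_sum, hcross,
      Finset.sum_const, Finset.card_univ, nsmul_eq_mul]
    ring
  have hdefect_nonneg (i j : ι) : 0 ≤ defect i j := by
    simpa only [star_trivial] using dotProduct_star_self_nonneg (u i - block M i j *ᵥ u j)
  have hdefect_sum : ∑ i, ∑ j, defect i j = 0 :=
    le_antisymm
      ((Finset.sum_le_sum fun i _ => Finset.sum_le_sum fun j _ => hdefect_le i j).trans_eq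
        hbound_sum)
      (Fintype.sum_nonneg fun i => Fintype.sum_nonneg (hdefect_nonneg i))
  have hdefect_zero : defect i j = 0 := by
    rw [Fintype.sum_eq_zero_iff_of_nonneg fun i => Fintype.sum_nonneg (hdefect_nonneg i)]
      at hdefect_sum
    exact congrFun ((Fintype.sum_eq_zero_iff_of_nonneg (hdefect_nonneg i)).1
      (congrFun hdefect_sum i)) j
  exact (sub_eq_zero.1 (dotProduct_self_eq_zero.1 hdefect_zero)).symm

theorem dotProduct_self_eq_of_mulVec_eq_card_smul (hM : M.PosSemidef)
    (hdiag : ∀ i, block M i i = 1) {u : ι → κ → ℝ}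
    (heig : M *ᵥ Function.uncurry u = (Fintype.card ι : ℝ) • Function.uncurry u) (i j : ι) :
    u i ⬝ᵥ u i = u j ⬝ᵥ u j := by
  have hnorm_le (i j : ι) : u i ⬝ᵥ u i ≤ u j ⬝ᵥ u j := by
    rw [← block_mulVec_eq_of_mulVec_eq_card_smul hM hdiag heig i j]
    exact mulVec_dotProduct_mulVec_le_of_forall
      fun x => hM.two_mul_dotProduct_block_mulVec_le hdiag i j x (u j)
  exact le_antisymm (hnorm_le i j) (hnorm_le j i)

end Eigenvector

end Matrix

theorem blocksym_top_eigenvector_general (N r : ℕ)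
    (M : Matrix (Fin N × Fin r) (Fin N × Fin r) ℝ) (hM : M.PosSemidef)
    (hdiag : ∀ i a b, M (i, a) (i, b) = if a = b then (1 : ℝ) else 0)
    (vs : Fin N → Fin r → ℝ) (v : Fin N × Fin r → ℝ)
    (hv : v = fun p => vs p.1 p.2)
    (heig : M.mulVec v = (N : ℝ) • v) :
    (∀ i j, ∑ a, vs i a ^ 2 = ∑ a, vs j a ^ 2) ∧
      (∀ i j, (Matrix.of fun a b : Fin r => M (i, a) (j, b)).mulVec (vs j) = vs i) := by
  subst hv
  have hdiag' (i : Fin N) : block M i i = 1 := by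
    ext a b
    simp [block, one_apply, hdiag]
  have heig' : M *ᵥ Function.uncurry vs = (Fintype.card (Fin N) : ℝ) • Function.uncurry vs := by
    rwa [Fintype.card_fin]
  refine ⟨fun i j => ?_, block_mulVec_eq_of_mulVec_eq_card_smul hM hdiag' heig'⟩
  simpa [dotProduct, sq] using dotProduct_self_eq_of_mulVec_eq_card_smul hM hdiag' heig' i j

/-- If `M ⪰ 0` has identity diagonal blocks and `M v = N v` for `v ≠ 0` the concatenation
of `v_1, …, v_N ∈ ℝ^r`, then all `‖v_i‖` are equal and `M_{[ij]} v_j = v_i` for all `i, j`. -/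
theorem blocksym_top_eigenvector (N r : ℕ)
    (M : Matrix (Fin N × Fin r) (Fin N × Fin r) ℝ) (hM : M.PosSemidef)
    (hdiag : ∀ i a b, M (i, a) (i, b) = if a = b then (1 : ℝ) else 0)
    (vs : Fin N → Fin r → ℝ) (v : Fin N × Fin r → ℝ)
    (hv : v = fun p => vs p.1 p.2) (hv0 : v ≠ 0)
    (heig : M.mulVec v = (N : ℝ) • v) :
    (∀ i j, ∑ a, vs i a ^ 2 = ∑ a, vs j a ^ 2) ∧
      (∀ i j, (Matrix.of fun a b : Fin r => M (i, a) (j, b)).mulVec (vs j) = vs i) :=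
  blocksym_top_eigenvector_general N r M hM hdiag vs v hv heig
end

section
/- Spectral decomposition of the partial transpose of a rank-one matrix: let V = Σ σ_i y_i z_i^T be an SVD with r ≤ N, v = vec(V). Then (vv^T)^Γ = Σ_i σ_i² d_i d_i^T + Σ_{i<j} σ_i σ_j s_{ij} s_{ij}^T − Σ_{i<j} σ_i σ_j a_{ij} a_{ij}^T, where d_i = z_i ⊗ y_i, s_{ij} = (z_i ⊗ y_j + z_j ⊗ y_i)/√2, a_{ij} = (z_i ⊗ y_j − z_j ⊗ y_i)/√2, and these r² vectors are orthonormal. -/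
/-!
Writing `e i j = z_i ⊗ y_j`, we have `v = Σ σ_i e i i`, and since the partial transpose swaps
the `y`-factors of `(z ⊗ y)(z' ⊗ y')ᵀ`, it maps `v vᵀ` to `Σ_{i,j} σ_i σ_j e i j (e j i)ᵀ`.
The diagonal terms give the `d_i d_iᵀ`, and each pair `i < j` contributes
`σ_i σ_j (e i j (e j i)ᵀ + e j i (e i j)ᵀ) = σ_i σ_j (s_{ij} s_{ij}ᵀ - a_{ij} a_{ij}ᵀ)` by
polarization. Orthonormality of the `z_i` and `y_j` makes the `e i j` orthonormal, and the
`d_i, s_{ij}, a_{ij}` arise from them by orthogonal changes of basis in the planes spanned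
by `e i j, e j i`.
-/

open Matrix

/-- The partial transpose of an `rN × rN` matrix viewed as an `N × N` array of `r × r`
blocks: each block is transposed. -/
def partialTranspose {N r : ℕ} (M : Matrix (Fin N × Fin r) (Fin N × Fin r) ℝ) :
    Matrix (Fin N × Fin r) (Fin N × Fin r) ℝ :=
  Matrix.of fun p q => M (p.1, q.2) (q.1, p.2)

open Finset
open scoped Kronecker

theorem sum_sum_eq_sum_diag_add_sum_lt {ι M : Type*} [Fintype ι] [LinearOrder ι]
    [AddCommMonoid M] (F : ι → ι → M) :
    ∑ i, ∑ j, F i j = ∑ i, F i i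
      + ∑ p ∈ univ.filter (fun p : ι × ι => p.1 < p.2), (F p.1 p.2 + F p.2 p.1) := by
  have hswap : ∑ p ∈ univ.filter (fun p : ι × ι => p.1 < p.2), F p.2 p.1
      = ∑ p ∈ univ.filter (fun p : ι × ι => p.2 < p.1), F p.1 p.2 :=
    sum_equiv (Equiv.prodComm ι ι) (by simp) (by simp)
  have hdiag : ∑ i, F i i = ∑ p : ι × ι, if p.1 = p.2 then F p.1 p.2 else 0 := by
    simp [Fintype.sum_prod_type]
  rw [sum_add_distrib, hswap, hdiag, sum_filter, sum_filter, ← sum_add_distrib,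
    ← sum_add_distrib, ← Fintype.sum_prod_type']
  refine sum_congr rfl fun p _ => ?_
  rcases lt_trichotomy p.1 p.2 with h | h | h
  · simp [h, ne_of_lt h, lt_asymm h]
  · simp [h]
  · simp [h, ne_of_gt h, lt_asymm h]

variable {ι κ α β R : Type*}

section Kronecker

def kroneckerVec [Mul R] (z : ι → R) (y : κ → R) : ι × κ → R := fun p => z p.1 * y p.2

variable [CommSemiring R]

theorem vecMulVec_kroneckerVec {ι' κ' : Type*} (z : ι → R) (z' : ι' → R) (y : κ → R)
    (y' : κ' → R) :
    vecMulVec (kroneckerVec z y) (kroneckerVec z' y') = vecMulVec z z' ⊗ₖ vecMulVec y y' := by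
  ext p q
  simp only [kroneckerVec, vecMulVec_apply, kroneckerMap_apply]
  ring

theorem kroneckerVec_dotProduct [Fintype ι] [Fintype κ] (z z' : ι → R) (y y' : κ → R) :
    kroneckerVec z y ⬝ᵥ kroneckerVec z' y' = (z ⬝ᵥ z') * (y ⬝ᵥ y') := by
  simp only [dotProduct, kroneckerVec, Fintype.sum_prod_type, sum_mul_sum]
  exact sum_congr rfl fun a _ => sum_congr rfl fun b _ => by ring

theorem kroneckerVec_dotProduct_eq_ite [Fintype ι] [Fintype κ] [DecidableEq α] [DecidableEq β]
    {z : α → ι → R} {y : β → κ → R}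
    (hz : ∀ a b, z a ⬝ᵥ z b = if a = b then 1 else 0)
    (hy : ∀ a b, y a ⬝ᵥ y b = if a = b then 1 else 0) (a : α) (b : β) (c : α) (d : β) :
    kroneckerVec (z a) (y b) ⬝ᵥ kroneckerVec (z c) (y d) = if a = c ∧ b = d then 1 else 0 := by
  rw [kroneckerVec_dotProduct, hz, hy, ite_zero_mul_ite_zero, mul_one]

theorem vecMulVec_sum_sum (s : Finset α) (t : Finset β) (u : α → ι → R) (v : β → κ → R) :
    vecMulVec (∑ i ∈ s, u i) (∑ j ∈ t, v j) = ∑ i ∈ s, ∑ j ∈ t, vecMulVec (u i) (v j) := by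
  ext a b
  simp only [vecMulVec_apply, Finset.sum_apply, Matrix.sum_apply, sum_mul_sum]

end Kronecker

section PartialTranspose

variable {N r : ℕ}

theorem partialTranspose_kronecker (A : Matrix (Fin N) (Fin N) ℝ) (B : Matrix (Fin r) (Fin r) ℝ) :
    partialTranspose (A ⊗ₖ B) = A ⊗ₖ Bᵀ :=
  rfl

theorem partialTranspose_smul (c : ℝ) (M : Matrix (Fin N × Fin r) (Fin N × Fin r) ℝ) :
    partialTranspose (c • M) = c • partialTranspose M :=
  rfl

theorem partialTranspose_sum (s : Finset α) (M : α → Matrix (Fin N × Fin r) (Fin N × Fin r) ℝ) :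
    partialTranspose (∑ i ∈ s, M i) = ∑ i ∈ s, partialTranspose (M i) := by
  ext p q
  simp only [partialTranspose, of_apply, Matrix.sum_apply]

theorem partialTranspose_vecMulVec_kroneckerVec (z z' : Fin N → ℝ) (y y' : Fin r → ℝ) :
    partialTranspose (vecMulVec (kroneckerVec z y) (kroneckerVec z' y'))
      = vecMulVec (kroneckerVec z y') (kroneckerVec z' y) := by
  rw [vecMulVec_kroneckerVec, partialTranspose_kronecker, transpose_vecMulVec,
    vecMulVec_kroneckerVec]

theorem partialTranspose_vecMulVec_sum_kroneckerVec [Fintype κ] (σ : κ → ℝ) (z : κ → Fin N → ℝ)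
    (y : κ → Fin r → ℝ) :
    partialTranspose (vecMulVec (∑ i, σ i • kroneckerVec (z i) (y i))
        (∑ i, σ i • kroneckerVec (z i) (y i)))
      = ∑ i, ∑ j, (σ i * σ j) • vecMulVec (kroneckerVec (z i) (y j)) (kroneckerVec (z j) (y i)) := by
  simp only [vecMulVec_sum_sum, partialTranspose_sum, smul_vecMulVec, vecMulVec_smul,
    partialTranspose_smul, partialTranspose_vecMulVec_kroneckerVec, smul_smul]
  exact sum_congr rfl fun i _ => sum_congr rfl fun j _ => by rw [mul_comm]

end PartialTranspose

theorem vecMulVec_add_sub_vecMulVec_sub (e f : ι → ℝ) :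
    vecMulVec ((√2)⁻¹ • (e + f)) ((√2)⁻¹ • (e + f))
      - vecMulVec ((√2)⁻¹ • (e - f)) ((√2)⁻¹ • (e - f)) = vecMulVec e f + vecMulVec f e := by
  ext a b
  simp only [vecMulVec_apply, Matrix.sub_apply, Matrix.add_apply, Pi.smul_apply, Pi.add_apply,
    Pi.sub_apply, smul_eq_mul]
  linear_combination 2 * (e a * f b + f a * e b) * TsirelsonInequality.sqrt_two_inv_mul_self

section SymmAntisymm

variable [Fintype ι] [DecidableEq κ] {e : κ → κ → ι → ℝ}
  (he : ∀ a b c d, e a b ⬝ᵥ e c d = if a = c ∧ b = d then 1 else 0)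
include he

theorem symm_dotProduct_diag {i j : κ} (hij : i ≠ j) (k : κ) :
    ((√2)⁻¹ • (e i j + e j i)) ⬝ᵥ e k k = 0 := by
  simp only [smul_dotProduct, add_dotProduct, he, smul_eq_mul]
  split_ifs <;> grind

theorem antisymm_dotProduct_diag (i j k : κ) :
    ((√2)⁻¹ • (e i j - e j i)) ⬝ᵥ e k k = 0 := by
  simp only [smul_dotProduct, sub_dotProduct, he, smul_eq_mul]
  split_ifs <;> grind

theorem symm_dotProduct_antisymm (i j k l : κ) :
    ((√2)⁻¹ • (e i j + e j i)) ⬝ᵥ ((√2)⁻¹ • (e k l - e l k)) = 0 := by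
  simp only [smul_dotProduct, dotProduct_smul, add_dotProduct, dotProduct_sub, he, smul_eq_mul]
  split_ifs <;> grind

end SymmAntisymm

section SymmAntisymmFamily

variable [LinearOrder κ] {e : κ → κ → ι → ℝ}

noncomputable def symmAntisymmFamily (e : κ → κ → ι → ℝ) (p : κ × κ) : ι → ℝ :=
  if p.1 = p.2 then e p.1 p.1
  else if p.1 < p.2 then (√2)⁻¹ • (e p.1 p.2 + e p.2 p.1)
  else (√2)⁻¹ • (e p.2 p.1 - e p.1 p.2)

theorem symmAntisymmFamily_diag (i : κ) : symmAntisymmFamily e (i, i) = e i i :=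
  if_pos rfl

theorem symmAntisymmFamily_of_lt {i j : κ} (h : i < j) :
    symmAntisymmFamily e (i, j) = (√2)⁻¹ • (e i j + e j i) :=
  (if_neg h.ne).trans (if_pos h)

theorem symmAntisymmFamily_of_gt {i j : κ} (h : j < i) :
    symmAntisymmFamily e (i, j) = (√2)⁻¹ • (e j i - e i j) :=
  (if_neg h.ne').trans (if_neg (lt_asymm h))

variable [Fintype ι] (he : ∀ a b c d, e a b ⬝ᵥ e c d = if a = c ∧ b = d then 1 else 0)
include he

theorem symm_dotProduct_symm {i j k l : κ} (hij : i < j) (hkl : k < l) :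
    ((√2)⁻¹ • (e i j + e j i)) ⬝ᵥ ((√2)⁻¹ • (e k l + e l k))
      = if i = k ∧ j = l then 1 else 0 := by
  simp only [smul_dotProduct, dotProduct_smul, add_dotProduct, dotProduct_add, he, smul_eq_mul]
  split_ifs <;> grind [TsirelsonInequality.sqrt_two_inv_mul_self]

theorem antisymm_dotProduct_antisymm {i j k l : κ} (hij : i < j) (hkl : k < l) :
    ((√2)⁻¹ • (e i j - e j i)) ⬝ᵥ ((√2)⁻¹ • (e k l - e l k))
      = if i = k ∧ j = l then 1 else 0 := by
  simp only [smul_dotProduct, dotProduct_smul, sub_dotProduct, dotProduct_sub, he, smul_eq_mul]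
  split_ifs <;> grind [TsirelsonInequality.sqrt_two_inv_mul_self]

theorem symmAntisymmFamily_dotProduct (p q : κ × κ) :
    symmAntisymmFamily e p ⬝ᵥ symmAntisymmFamily e q = if p = q then 1 else 0 := by
  obtain ⟨i, j⟩ := p
  obtain ⟨k, l⟩ := q
  simp only [Prod.mk.injEq]
  rcases lt_trichotomy i j with hij | rfl | hij <;> rcases lt_trichotomy k l with hkl | rfl | hkl
  · rw [symmAntisymmFamily_of_lt hij, symmAntisymmFamily_of_lt hkl, symm_dotProduct_symm he hij hkl]
  · rw [symmAntisymmFamily_of_lt hij, symmAntisymmFamily_diag, symm_dotProduct_diag he hij.ne]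
    grind
  · rw [symmAntisymmFamily_of_lt hij, symmAntisymmFamily_of_gt hkl, symm_dotProduct_antisymm he]
    grind
  · rw [symmAntisymmFamily_diag, symmAntisymmFamily_of_lt hkl, dotProduct_comm,
      symm_dotProduct_diag he hkl.ne]
    grind
  · rw [symmAntisymmFamily_diag, symmAntisymmFamily_diag, he]
  · rw [symmAntisymmFamily_diag, symmAntisymmFamily_of_gt hkl, dotProduct_comm,
      antisymm_dotProduct_diag he]
    grind
  · rw [symmAntisymmFamily_of_gt hij, symmAntisymmFamily_of_lt hkl, dotProduct_comm,
      symm_dotProduct_antisymm he]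
    grind
  · rw [symmAntisymmFamily_of_gt hij, symmAntisymmFamily_diag, antisymm_dotProduct_diag he]
    grind
  · rw [symmAntisymmFamily_of_gt hij, symmAntisymmFamily_of_gt hkl,
      antisymm_dotProduct_antisymm he hij hkl]
    simp only [and_comm]

end SymmAntisymmFamily

theorem partialTranspose_rank_one_general (r N : ℕ)
    (σ : Fin r → ℝ)
    (y : Fin r → Fin r → ℝ) (z : Fin r → Fin N → ℝ)
    (hy : ∀ i j, y i ⬝ᵥ y j = if i = j then (1 : ℝ) else 0)
    (hz : ∀ i j, z i ⬝ᵥ z j = if i = j then (1 : ℝ) else 0)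
    (V : Matrix (Fin r) (Fin N) ℝ)
    (hV : V = ∑ i, σ i • Matrix.vecMulVec (y i) (z i))
    (v : Fin N × Fin r → ℝ) (hv : v = fun p => V p.2 p.1)
    (dv : Fin r → Fin N × Fin r → ℝ)
    (hd : dv = fun i p => z i p.1 * y i p.2)
    (sv av : Fin r → Fin r → Fin N × Fin r → ℝ)
    (hs : sv = fun i j p => (z i p.1 * y j p.2 + z j p.1 * y i p.2) / Real.sqrt 2)
    (ha : av = fun i j p => (z i p.1 * y j p.2 - z j p.1 * y i p.2) / Real.sqrt 2)
    (w : Fin r × Fin r → Fin N × Fin r → ℝ)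
    (hw : w = fun p => if p.1 = p.2 then dv p.1
      else if p.1 < p.2 then sv p.1 p.2 else av p.2 p.1) :
    partialTranspose (Matrix.vecMulVec v v)
        = ∑ i, (σ i) ^ 2 • Matrix.vecMulVec (dv i) (dv i)
          + ∑ p ∈ Finset.univ.filter (fun p : Fin r × Fin r => p.1 < p.2),
              (σ p.1 * σ p.2) • Matrix.vecMulVec (sv p.1 p.2) (sv p.1 p.2)
          - ∑ p ∈ Finset.univ.filter (fun p : Fin r × Fin r => p.1 < p.2),
              (σ p.1 * σ p.2) • Matrix.vecMulVec (av p.1 p.2) (av p.1 p.2)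
      ∧ ∀ p q : Fin r × Fin r, w p ⬝ᵥ w q = if p = q then (1 : ℝ) else 0 := by
  set e : Fin r → Fin r → Fin N × Fin r → ℝ := fun i j => kroneckerVec (z i) (y j)
  have hd' : dv = fun i => e i i := hd
  have hv' : v = ∑ i, σ i • e i i := by
    ext p
    simp [hv, hV, e, kroneckerVec, vecMulVec_apply, Matrix.sum_apply, mul_comm (y _ _)]
  have hs' : sv = fun i j => (√2)⁻¹ • (e i j + e j i) := by
    ext i j p
    simp [hs, e, kroneckerVec, div_eq_inv_mul]
  have ha' : av = fun i j => (√2)⁻¹ • (e i j - e j i) := by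
    ext i j p
    simp [ha, e, kroneckerVec, div_eq_inv_mul]
  have hw' : w = symmAntisymmFamily e := by
    rw [hw, hd', hs', ha']
    rfl
  refine ⟨?_, ?_⟩
  · rw [hv', partialTranspose_vecMulVec_sum_kroneckerVec, sum_sum_eq_sum_diag_add_sum_lt,
      add_sub_assoc, ← sum_sub_distrib, hd', hs', ha']
    congr 1
    · simp only [sq, e]
    · refine sum_congr rfl fun p _ => ?_
      rw [← smul_sub, vecMulVec_add_sub_vecMulVec_sub, smul_add, mul_comm (σ p.2)]
  · rw [hw']
    exact symmAntisymmFamily_dotProduct (kroneckerVec_dotProduct_eq_ite hz hy)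

/-- Spectral decomposition of the partial transpose of `v vᵀ` for `v = vec(V)`,
`V = Σ σ_i y_i z_iᵀ` an SVD with `r ≤ N`; the vectors `d_i`, `s_{ij}`, `a_{ij}`
form an orthonormal family of `r²` vectors. -/
theorem partialTranspose_rank_one (r N : ℕ) (hrN : r ≤ N)
    (σ : Fin r → ℝ) (hσ : ∀ i, 0 ≤ σ i)
    (y : Fin r → Fin r → ℝ) (z : Fin r → Fin N → ℝ)
    (hy : ∀ i j, y i ⬝ᵥ y j = if i = j then (1 : ℝ) else 0)
    (hz : ∀ i j, z i ⬝ᵥ z j = if i = j then (1 : ℝ) else 0)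
    (V : Matrix (Fin r) (Fin N) ℝ)
    (hV : V = ∑ i, σ i • Matrix.vecMulVec (y i) (z i))
    (v : Fin N × Fin r → ℝ) (hv : v = fun p => V p.2 p.1)
    (dv : Fin r → Fin N × Fin r → ℝ)
    (hd : dv = fun i p => z i p.1 * y i p.2)
    (sv av : Fin r → Fin r → Fin N × Fin r → ℝ)
    (hs : sv = fun i j p => (z i p.1 * y j p.2 + z j p.1 * y i p.2) / Real.sqrt 2)
    (ha : av = fun i j p => (z i p.1 * y j p.2 - z j p.1 * y i p.2) / Real.sqrt 2)
    (w : Fin r × Fin r → Fin N × Fin r → ℝ)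
    (hw : w = fun p => if p.1 = p.2 then dv p.1
      else if p.1 < p.2 then sv p.1 p.2 else av p.2 p.1) :
    partialTranspose (Matrix.vecMulVec v v)
        = ∑ i, (σ i) ^ 2 • Matrix.vecMulVec (dv i) (dv i)
          + ∑ p ∈ Finset.univ.filter (fun p : Fin r × Fin r => p.1 < p.2),
              (σ p.1 * σ p.2) • Matrix.vecMulVec (sv p.1 p.2) (sv p.1 p.2)
          - ∑ p ∈ Finset.univ.filter (fun p : Fin r × Fin r => p.1 < p.2),
              (σ p.1 * σ p.2) • Matrix.vecMulVec (av p.1 p.2) (av p.1 p.2)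
      ∧ ∀ p q : Fin r × Fin r, w p ⬝ᵥ w q = if p = q then (1 : ℝ) else 0 :=
  partialTranspose_rank_one_general r N σ y z hy hz V hV v hv dv hd sv av hs ha w hw
end

section
/- For any V ∈ R^{r×N} with v = vec(V), the matrix I_N ⊗ (V V^T) − (vv^T)^Γ is positive semidefinite. -/
/-!
Write a test vector as `x = vec X` and put `B = Xᵀ V`. Then `I_N ⊗ (V Vᵀ)` acts on `vec X` as
`X ↦ V Vᵀ X` and the partial transpose of `v vᵀ` as `X ↦ V Xᵀ V`, so the quadratic form at `x` is
`tr (B Bᵀ) - tr (B B) = ½ ‖B - Bᵀ‖²_F ≥ 0`.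
-/

open Matrix

theorem isHermitian_partialTranspose {N r : ℕ} {M : Matrix (Fin N × Fin r) (Fin N × Fin r) ℝ}
    (hM : M.IsHermitian) : (partialTranspose M).IsHermitian :=
  ext fun p q => hM.apply (p.1, q.2) (q.1, p.2)

theorem partialTranspose_vecMulVec_mulVec_vec {N r : ℕ} (U W X : Matrix (Fin r) (Fin N) ℝ) :
    partialTranspose (vecMulVec (vec U) (vec W)) *ᵥ vec X = vec (W * Xᵀ * U) := by
  ext ⟨i, a⟩
  simp only [partialTranspose, mulVec, dotProduct, of_apply, vecMulVec_apply, vec, mul_apply,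
    transpose_apply, Fintype.sum_prod_type, Finset.sum_mul]
  rw [Finset.sum_comm]
  exact Finset.sum_congr rfl fun j _ => Finset.sum_congr rfl fun b _ => by ring

theorem Matrix.trace_mul_transpose_self_nonneg {n R : Type*} [Fintype n] [CommRing R]
    [LinearOrder R] [IsStrictOrderedRing R] (A : Matrix n n R) : 0 ≤ trace (A * Aᵀ) := by
  simp only [trace, diag, mul_apply, transpose_apply]
  exact Finset.sum_nonneg fun i _ => Finset.sum_nonneg fun j _ => mul_self_nonneg _

theorem Matrix.trace_mul_self_le_trace_mul_transpose_self {n R : Type*} [Fintype n] [CommRing R]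
    [LinearOrder R] [IsStrictOrderedRing R] (B : Matrix n n R) :
    trace (B * B) ≤ trace (B * Bᵀ) := by
  have h := trace_mul_transpose_self_nonneg (B - Bᵀ)
  rw [transpose_sub, transpose_transpose, sub_mul, mul_sub, mul_sub, trace_sub, trace_sub,
    trace_sub, ← transpose_mul, trace_transpose, trace_mul_comm Bᵀ B] at h
  linarith

/-- For any `V ∈ ℝ^{r×N}` with `v = vec(V)`, the matrix `I_N ⊗ (V Vᵀ) − (v vᵀ)^Γ`
is positive semidefinite. -/
theorem kron_sub_partialTranspose_posSemidef (r N : ℕ)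
    (V : Matrix (Fin r) (Fin N) ℝ)
    (v : Fin N × Fin r → ℝ) (hv : v = fun p => V p.2 p.1) :
    (Matrix.kroneckerMap (· * ·) (1 : Matrix (Fin N) (Fin N) ℝ) (V * Vᵀ)
        - partialTranspose (Matrix.vecMulVec v v)).PosSemidef := by
  obtain rfl : v = vec V := hv
  refine .of_dotProduct_mulVec_nonneg ?_ fun x => ?_
  · exact (PosSemidef.one.kronecker (posSemidef_self_mul_conjTranspose V)).isHermitian.sub
      (isHermitian_partialTranspose (posSemidef_vecMulVec_self_star (vec V)).isHermitian)
  · obtain ⟨X, rfl⟩ := vec_bijective.surjective x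
    rw [star_trivial, sub_mulVec, dotProduct_sub, kronecker_mulVec_vec,
      partialTranspose_vecMulVec_mulVec_vec, vec_dotProduct_vec, vec_dotProduct_vec, sub_nonneg]
    simpa [Matrix.mul_assoc] using trace_mul_self_le_trace_mul_transpose_self (Xᵀ * V)
end

section
/- Let v_1, ..., v_N ∈ R^r form a unit norm tight frame with columns matrix V and v = vec(V). Define D := vv^T − (vv^T)^Γ + I_N ⊗ (V V^T). Then D ⪰ vv^T, Tr(D) = N², and the off-diagonal blocks D_{[ij]} = v_i v_j^T − v_j v_i^T (i ≠ j) are antisymmetric. -/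
/-!
Writing `v = vec V`, one has `D - v vᵀ = I_N ⊗ V Vᵀ - (v vᵀ)^Γ`, and this matrix equals
`½ ∑_{i,j} u_{ij} u_{ij}ᵀ` with `u_{ij} = e_i ⊗ v_j - e_j ⊗ v_i`; hence it is positive
semidefinite. Partial transposition preserves the diagonal, so the first two
terms of `D` have equal traces and `Tr D = Tr I_N · Tr (V Vᵀ) = N · ∑ ‖v_i‖² = N²`.
-/

open Matrix

open scoped Kronecker

section

variable {N r : ℕ}

theorem trace_partialTranspose (M : Matrix (Fin N × Fin r) (Fin N × Fin r) ℝ) :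
    (partialTranspose M).trace = M.trace :=
  rfl

/-- The vector `e_i ⊗ v_j - e_j ⊗ v_i`, where `v_k` is the `k`-th column of `V`. -/
def wedgeVec (V : Matrix (Fin r) (Fin N) ℝ) (i j : Fin N) : Fin N × Fin r → ℝ :=
  fun p => (if p.1 = i then V p.2 j else 0) - (if p.1 = j then V p.2 i else 0)

theorem sum_vecMulVec_wedgeVec (V : Matrix (Fin r) (Fin N) ℝ) :
    ∑ i, ∑ j, vecMulVec (wedgeVec V i j) (wedgeVec V i j) =
      (2 : ℝ) • ((1 : Matrix (Fin N) (Fin N) ℝ) ⊗ₖ (V * Vᵀ)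
        - partialTranspose (vecMulVec V.vec V.vec)) := by
  ext ⟨k, a⟩ ⟨l, b⟩
  simp only [Matrix.sum_apply, vecMulVec_apply, wedgeVec, mul_sub, mul_ite, sub_mul, ite_mul, zero_mul,
    mul_zero, Finset.sum_sub_distrib, Finset.sum_ite_irrel, Finset.sum_const_zero, Finset.sum_ite_eq,
    Finset.mem_univ, ↓reduceIte, partialTranspose, vec, Matrix.smul_apply, Matrix.sub_apply,
    kroneckerMap_apply, one_apply, mul_apply, transpose_apply, one_mul, of_apply, smul_eq_mul]
  split_ifs <;> ring

theorem posSemidef_one_kronecker_sub_partialTranspose (V : Matrix (Fin r) (Fin N) ℝ) :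
    ((1 : Matrix (Fin N) (Fin N) ℝ) ⊗ₖ (V * Vᵀ)
      - partialTranspose (vecMulVec V.vec V.vec)).PosSemidef := by
  have hsum : (∑ i, ∑ j, vecMulVec (wedgeVec V i j) (wedgeVec V i j)).PosSemidef :=
    posSemidef_sum _ fun i _ => posSemidef_sum _ fun j _ => by
      simpa using posSemidef_vecMulVec_self_star (wedgeVec V i j)
  rw [sum_vecMulVec_wedgeVec] at hsum
  simpa using hsum.smul (show (0 : ℝ) ≤ 2⁻¹ by norm_num)

theorem trace_mul_transpose_eq_card {m n R : Type*} [Fintype m] [Fintype n] [CommSemiring R]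
    (V : Matrix m n R) (hV : ∀ i, ∑ a, V a i ^ 2 = 1) :
    (V * Vᵀ).trace = Fintype.card n := by
  rw [trace_mul_comm]
  simp [trace, mul_apply, ← sq, hV]

def dualCertificate (V : Matrix (Fin r) (Fin N) ℝ) : Matrix (Fin N × Fin r) (Fin N × Fin r) ℝ :=
  vecMulVec V.vec V.vec - partialTranspose (vecMulVec V.vec V.vec)
    + (1 : Matrix (Fin N) (Fin N) ℝ) ⊗ₖ (V * Vᵀ)

theorem posSemidef_dualCertificate_sub (V : Matrix (Fin r) (Fin N) ℝ) :
    (dualCertificate V - vecMulVec V.vec V.vec).PosSemidef := by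
  convert posSemidef_one_kronecker_sub_partialTranspose V using 1
  rw [dualCertificate]
  abel

theorem trace_dualCertificate (V : Matrix (Fin r) (Fin N) ℝ) :
    (dualCertificate V).trace = N * (V * Vᵀ).trace := by
  simp [dualCertificate, trace_partialTranspose, trace_kronecker]

theorem dualCertificate_apply_of_ne (V : Matrix (Fin r) (Fin N) ℝ) {i j : Fin N} (hij : i ≠ j)
    (a b : Fin r) :
    dualCertificate V (i, a) (j, b) = V a i * V b j - V a j * V b i := by
  simp only [dualCertificate, partialTranspose, vecMulVec_apply, vec, Matrix.add_apply,
    Matrix.sub_apply, of_apply, kroneckerMap_apply, one_apply, hij, ↓reduceIte, zero_mul, add_zero]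
  ring

end

theorem dual_certificate_general (N r : ℕ)
    (v : Fin N → Fin r → ℝ) (hv : ∀ i, ∑ a, v i a ^ 2 = 1)
    (V : Matrix (Fin r) (Fin N) ℝ) (hV : ∀ a i, V a i = v i a)
    (w : Fin N × Fin r → ℝ) (hw : w = fun p => v p.1 p.2)
    (D : Matrix (Fin N × Fin r) (Fin N × Fin r) ℝ)
    (hD : D = Matrix.vecMulVec w w - partialTranspose (Matrix.vecMulVec w w)
        + Matrix.kroneckerMap (· * ·) (1 : Matrix (Fin N) (Fin N) ℝ) (V * Vᵀ)) :
    (D - Matrix.vecMulVec w w).PosSemidef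
      ∧ D.trace = (N : ℝ) ^ 2
      ∧ ∀ i j : Fin N, i ≠ j → ∀ a b : Fin r,
          D (i, a) (j, b) = v i a * v j b - v j a * v i b := by
  obtain rfl : v = Vᵀ := funext₂ fun i a => (hV a i).symm
  obtain rfl : w = V.vec := hw
  obtain rfl : D = dualCertificate V := hD
  refine ⟨posSemidef_dualCertificate_sub V, ?_, fun i j hij => dualCertificate_apply_of_ne V hij⟩
  rw [trace_dualCertificate, trace_mul_transpose_eq_card V hv, Fintype.card_fin, sq]

/-- For a UNTF with columns matrix `V` and `v = vec(V)`, the matrix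
`D := v vᵀ − (v vᵀ)^Γ + I_N ⊗ (V Vᵀ)` satisfies `D ⪰ v vᵀ`, `Tr(D) = N²`, and its
off-diagonal blocks are `D_{[ij]} = v_i v_jᵀ − v_j v_iᵀ` (antisymmetric). -/
theorem dual_certificate (N r : ℕ)
    (v : Fin N → Fin r → ℝ) (hv : ∀ i, ∑ a, v i a ^ 2 = 1)
    (htight : ∑ i, Matrix.vecMulVec (v i) (v i)
        = ((N : ℝ) / r) • (1 : Matrix (Fin r) (Fin r) ℝ))
    (V : Matrix (Fin r) (Fin N) ℝ) (hV : ∀ a i, V a i = v i a)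
    (w : Fin N × Fin r → ℝ) (hw : w = fun p => v p.1 p.2)
    (D : Matrix (Fin N × Fin r) (Fin N × Fin r) ℝ)
    (hD : D = Matrix.vecMulVec w w - partialTranspose (Matrix.vecMulVec w w)
        + Matrix.kroneckerMap (· * ·) (1 : Matrix (Fin N) (Fin N) ℝ) (V * Vᵀ)) :
    (D - Matrix.vecMulVec w w).PosSemidef
      ∧ D.trace = (N : ℝ) ^ 2
      ∧ ∀ i j : Fin N, i ≠ j → ∀ a b : Fin r,
          D (i, a) (j, b) = v i a * v j b - v j a * v i b :=
  dual_certificate_general N r v hv V hV w hw D hD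
end

section
/- Separable witness implies cut polytope membership (converse direction): if X ∈ C^N with X = Gram(v_1,...,v_N) for v_i ∈ R^r, then there exist m ≥ 1, nonnegative ρ_k summing to 1, and sign vectors d_k ∈ {±1}^N with X = Σ_k ρ_k d_k d_k^T; moreover the matrix M with blocks M_{[ij]} = Z^T D_i D_j Z (where D_i = diag((d_k)_i)_k and Z^T Z = I_r maps v_i to R^{1/2}(column of signs)) is psd, has identity diagonal blocks, symmetric off-diagonal blocks, and satisfies v^T M v = N², where v is the concatenation of the v_i. -/
/-!
Write `X = ∑ ρ_k d_k d_kᵀ`. The vectors `y_i = (√ρ_k d_{k i})_k ∈ ℝ^m` have the same Gram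
matrix `X` as the `v_i ∈ ℝ^r`, so an isometry of `ℝ^m ⊕ ℝ^r` maps each `(0, v_i)` to `(y_i, 0)`;
the images `z_a` of the unit vectors `(0, e_a)` are orthonormal, which gives the identity diagonal
blocks of the Gram matrix `M` of the sign-flipped vectors `D_i z_a`. Moreover
`∑_{i,a} v_{i a} D_i z_a = ∑_i D_i (y_i, 0) = N (√ρ, 0)` is `N` times a unit vector, so
`vᵀ M v = N²`.
-/

open Matrix
open scoped InnerProductSpace

section GramIsometry

variable {𝕜 ι E : Type*} [RCLike 𝕜] [Fintype ι] [NormedAddCommGroup E] [InnerProductSpace 𝕜 E]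

theorem inner_linearCombination_eq_of_gram_eq {x y : ι → E} (h : gram 𝕜 x = gram 𝕜 y)
    (c c' : ι → 𝕜) :
    ⟪Fintype.linearCombination 𝕜 x c, Fintype.linearCombination 𝕜 x c'⟫_𝕜
      = ⟪Fintype.linearCombination 𝕜 y c, Fintype.linearCombination 𝕜 y c'⟫_𝕜 := by
  simp only [Fintype.linearCombination_apply, ← star_dotProduct_gram_mulVec, h]

theorem exists_linearIsometry_apply_eq_of_gram_eq [FiniteDimensional 𝕜 E] {x y : ι → E}
    (h : gram 𝕜 x = gram 𝕜 y) : ∃ L : E →ₗᵢ[𝕜] E, ∀ i, L (x i) = y i := by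
  classical
  set A := Fintype.linearCombination 𝕜 x
  set B := Fintype.linearCombination 𝕜 y
  have hnorm (c : ι → 𝕜) : ‖B c‖ = ‖A c‖ := by
    simp only [@norm_eq_sqrt_re_inner 𝕜, A, B, inner_linearCombination_eq_of_gram_eq h]
  have hker : LinearMap.ker A ≤ LinearMap.ker B := fun c hc => by
    rw [LinearMap.mem_ker] at hc ⊢
    rw [← norm_eq_zero, hnorm, hc, norm_zero]
  -- `B` factors through `A`, isometrically on `range A`; `LinearIsometry.extend` does the rest.
  let L₀ : LinearMap.range A →ₗ[𝕜] E :=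
    (LinearMap.ker A).liftQ B hker ∘ₗ A.quotKerEquivRange.symm.toLinearMap
  have hL₀ (c : ι → 𝕜) : L₀ ⟨A c, LinearMap.mem_range_self A c⟩ = B c := by
    simp [L₀, LinearMap.quotKerEquivRange_symm_apply_image]
  let L₁ : LinearMap.range A →ₗᵢ[𝕜] E :=
    { L₀ with norm_map' := by rintro ⟨_, c, rfl⟩; exact (congrArg norm (hL₀ c)).trans (hnorm c) }
  refine ⟨L₁.extend, fun i => ?_⟩
  have hx : A (Pi.single i 1) = x i := by simp [A]
  have hy : B (Pi.single i 1) = y i := by simp [B]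
  rw [← hx, ← hy, ← hL₀]
  exact L₁.extend_apply ⟨A (Pi.single i 1), LinearMap.mem_range_self A _⟩

end GramIsometry

theorem exists_orthonormal_sum_smul_eq_of_dotProduct_eq {ι α κ : Type*} [Fintype ι] [Fintype α]
    [Fintype κ] (v : ι → α → ℝ) (y : ι → κ → ℝ) (h : ∀ i j, v i ⬝ᵥ v j = y i ⬝ᵥ y j) :
    ∃ z : α → EuclideanSpace ℝ (κ ⊕ α), Orthonormal ℝ z ∧
      ∀ i, ∑ a, v i a • z a = WithLp.toLp 2 (Sum.elim (y i) 0) := by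
  classical
  let x i : EuclideanSpace ℝ (κ ⊕ α) := WithLp.toLp 2 (Sum.elim 0 (v i))
  have hgram : gram ℝ x = gram ℝ fun i => WithLp.toLp 2 (Sum.elim (y i) (0 : α → ℝ)) := by
    ext i j
    simpa [gram_apply, x, EuclideanSpace.inner_eq_star_dotProduct, dotProduct,
      Fintype.sum_sum_type, mul_comm] using h j i
  obtain ⟨L, hL⟩ := exists_linearIsometry_apply_eq_of_gram_eq hgram
  let e (a : α) : EuclideanSpace ℝ (κ ⊕ α) := EuclideanSpace.single (Sum.inr a) 1
  have he : Orthonormal ℝ e := by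
    simpa [e, Function.comp_def] using
      ((EuclideanSpace.basisFun (κ ⊕ α) ℝ).orthonormal.comp Sum.inr Sum.inr_injective)
  refine ⟨L ∘ e, he.comp_linearIsometry L, fun i => ?_⟩
  have hx : x i = ∑ a, v i a • e a := by
    ext (k | a) <;> simp [x, e, Pi.single_apply]
  simp only [Function.comp_apply, ← map_smul, ← map_sum, ← hx, hL]

section SignedFamily

variable {ι α K : Type*}

/-- `D_i z_a` with `D_i = diagonal (s i)`: the Gram matrix has the blocks `Zᵀ D_i D_j Z`. -/
def signedFamily (s : ι → K → ℝ) (z : α → EuclideanSpace ℝ K) (p : ι × α) :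
    EuclideanSpace ℝ K :=
  WithLp.toLp 2 fun k => s p.1 k * z p.2 k

theorem inner_signedFamily [Fintype K] (s : ι → K → ℝ) (z : α → EuclideanSpace ℝ K) (p q : ι × α) :
    ⟪signedFamily s z p, signedFamily s z q⟫_ℝ
      = ∑ k, s p.1 k * s q.1 k * (z p.2 k * z q.2 k) := by
  simp only [signedFamily, PiLp.inner_apply]
  refine Finset.sum_congr rfl fun k _ => ?_
  simp only [RCLike.inner_apply, conj_trivial]
  ring

theorem gram_signedFamily_diag [Fintype K] [DecidableEq α] {s : ι → K → ℝ}
    {z : α → EuclideanSpace ℝ K} (hs : ∀ i k, s i k * s i k = 1) (hz : Orthonormal ℝ z) (i : ι) (a b : α) :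
    gram ℝ (signedFamily s z) (i, a) (i, b) = if a = b then 1 else 0 := by
  rw [gram_apply, inner_signedFamily, ← orthonormal_iff_ite.mp hz a b, PiLp.inner_apply]
  refine Finset.sum_congr rfl fun k _ => ?_
  simp only [hs, RCLike.inner_apply, conj_trivial]
  ring

theorem gram_signedFamily_swap [Fintype K] (s : ι → K → ℝ) (z : α → EuclideanSpace ℝ K) (i j : ι)
    (a b : α) :
    gram ℝ (signedFamily s z) (i, a) (j, b) = gram ℝ (signedFamily s z) (i, b) (j, a) := by
  simp only [gram_apply, inner_signedFamily]
  exact Finset.sum_congr rfl fun k _ => by ring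

theorem sum_smul_signedFamily [Fintype ι] [Fintype α] (s : ι → K → ℝ)
    (z : α → EuclideanSpace ℝ K) (v : ι → α → ℝ) (k : K) :
    (∑ p, v p.1 p.2 • signedFamily s z p) k = ∑ i, s i k * (∑ a, v i a • z a) k := by
  simp [signedFamily, Fintype.sum_prod_type, Finset.mul_sum, mul_left_comm]

end SignedFamily

theorem exists_posSemidef_unitBlocks_dotProduct_mulVec_eq_card_sq {ι α κ : Type*} [Fintype ι]
    [Fintype α] [DecidableEq α] [Fintype κ]
    (v : ι → α → ℝ) (ρ : κ → ℝ) (d : κ → ι → ℝ) (hρ : ∀ k, 0 ≤ ρ k) (hρ1 : ∑ k, ρ k = 1)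
    (hd : ∀ k i, d k i ^ 2 = 1) (hv : ∀ i j, v i ⬝ᵥ v j = ∑ k, ρ k * (d k i * d k j)) :
    ∃ M : Matrix (ι × α) (ι × α) ℝ, M.PosSemidef
      ∧ (∀ i a b, M (i, a) (i, b) = if a = b then 1 else 0)
      ∧ (∀ i j a b, M (i, a) (j, b) = M (i, b) (j, a))
      ∧ (fun p : ι × α => v p.1 p.2) ⬝ᵥ M *ᵥ (fun p => v p.1 p.2)
        = (Fintype.card ι : ℝ) ^ 2 := by
  let y i k := √(ρ k) * d k i
  have hy : ∀ i j, v i ⬝ᵥ v j = y i ⬝ᵥ y j := fun i j => by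
    rw [hv]
    refine Finset.sum_congr rfl fun k _ => ?_
    rw [← Real.mul_self_sqrt (hρ k)]
    ring
  obtain ⟨z, hz, hzv⟩ := exists_orthonormal_sum_smul_eq_of_dotProduct_eq v y hy
  let s i : κ ⊕ α → ℝ := Sum.elim (fun k => d k i) 1
  have hs : ∀ i k, s i k * s i k = 1 := by
    rintro i (k | a)
    · simpa [s, sq] using hd k i
    · simp [s]
  let u : EuclideanSpace ℝ (κ ⊕ α) := WithLp.toLp 2 (Sum.elim (fun k => √(ρ k)) 0)
  have hu : ‖u‖ = 1 := by
    simp [u, EuclideanSpace.norm_eq, Fintype.sum_sum_type, Real.sq_sqrt (hρ _), hρ1]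
  have hsum : ∑ p, v p.1 p.2 • signedFamily s z p = (Fintype.card ι : ℝ) • u := by
    ext (k | a)
    · have hk (i : ι) : d k i * (√(ρ k) * d k i) = √(ρ k) := by
        linear_combination √(ρ k) * hd k i
      simp [sum_smul_signedFamily, hzv, s, y, u, hk]
    · simp [sum_smul_signedFamily, hzv, s, u]
  refine ⟨gram ℝ (signedFamily s z), posSemidef_gram ℝ _, gram_signedFamily_diag hs hz,
    gram_signedFamily_swap s z, ?_⟩
  have h := star_dotProduct_gram_mulVec (𝕜 := ℝ) (signedFamily s z) (fun p => v p.1 p.2)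
    (fun p => v p.1 p.2)
  rw [star_trivial] at h
  rw [h, hsum, real_inner_self_eq_norm_sq, norm_smul, hu]
  simp

theorem exists_fin_sum_smul_eq_of_mem_convexHull {R E : Type*} [Field R] [LinearOrder R]
    [IsStrictOrderedRing R] [AddCommGroup E] [Module R E] {s : Set E} {x : E}
    (hx : x ∈ convexHull R s) :
    ∃ (m : ℕ) (ρ : Fin m → R) (p : Fin m → E), 0 < m ∧ (∀ k, 0 ≤ ρ k) ∧ ∑ k, ρ k = 1
      ∧ (∀ k, p k ∈ s) ∧ x = ∑ k, ρ k • p k := by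
  obtain ⟨ι, _, w, z, hw₀, hw₁, hz, rfl⟩ := mem_convexHull_iff_exists_fintype.mp hx
  let e := Fintype.equivFin ι
  have hne : Nonempty ι := Finset.univ_nonempty_iff.mp <|
    Finset.nonempty_of_sum_ne_zero (hw₁ ▸ one_ne_zero)
  exact ⟨_, w ∘ e.symm, z ∘ e.symm, Fintype.card_pos, fun _ => hw₀ _,
    (e.symm.sum_comp w).trans hw₁, fun _ => hz _, (e.symm.sum_comp _).symm⟩

/-- If `X = Gram(v_1, …, v_N)` lies in the cut polytope, then `X` is a convex
combination of sign matrices `d dᵀ`, and there is a witness `M ∈ B(N, r)` (psd, identity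
diagonal blocks, symmetric off-diagonal blocks) with `vᵀ M v = N²`, where `v` is the
concatenation of the `v_i`. -/
theorem cut_polytope_separable_witness (N r : ℕ)
    (v : Fin N → Fin r → ℝ) (X : Matrix (Fin N) (Fin N) ℝ)
    (hX : ∀ i j, X i j = v i ⬝ᵥ v j)
    (hcut : X ∈ convexHull ℝ {A : Matrix (Fin N) (Fin N) ℝ |
      ∃ x : Fin N → ℝ, (∀ i, x i = 1 ∨ x i = -1) ∧ A = Matrix.vecMulVec x x}) :
    (∃ (m : ℕ) (ρ : Fin m → ℝ) (d : Fin m → Fin N → ℝ),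
        0 < m ∧ (∀ k, 0 ≤ ρ k) ∧ ∑ k, ρ k = 1
          ∧ (∀ k i, d k i = 1 ∨ d k i = -1)
          ∧ X = ∑ k, ρ k • Matrix.vecMulVec (d k) (d k))
      ∧ ∃ M : Matrix (Fin N × Fin r) (Fin N × Fin r) ℝ, M.PosSemidef
          ∧ (∀ i a b, M (i, a) (i, b) = if a = b then (1 : ℝ) else 0)
          ∧ (∀ i j a b, M (i, a) (j, b) = M (i, b) (j, a))
          ∧ (fun p : Fin N × Fin r => v p.1 p.2)
              ⬝ᵥ M.mulVec (fun p : Fin N × Fin r => v p.1 p.2) = (N : ℝ) ^ 2 := by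
  obtain ⟨m, ρ, A, hm, hρ, hρ1, hA, hXA⟩ := exists_fin_sum_smul_eq_of_mem_convexHull hcut
  choose d hd hdA using hA
  have hXd : X = ∑ k, ρ k • vecMulVec (d k) (d k) := by simpa only [hdA] using hXA
  refine ⟨⟨m, ρ, d, hm, hρ, hρ1, hd, hXd⟩, ?_⟩
  have hd_sq (k i) : d k i ^ 2 = 1 := by rcases hd k i with h | h <;> simp [h]
  have hv (i j) : v i ⬝ᵥ v j = ∑ k, ρ k * (d k i * d k j) := by
    simp [← hX, hXd, Matrix.sum_apply, vecMulVec_apply]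
  simpa using exists_posSemidef_unitBlocks_dotProduct_mulVec_eq_card_sq v ρ d hρ hρ1 hd_sq hv
end

section
/- With N = r(r+1)/2 unit vectors forming an equiangular tight frame in R^r (r > 1), the Gram matrix X is an extreme point of the elliptope E^N = {X ⪰ 0, diag(X) = 1} but has rank r > 1, hence X is not a cut matrix xx^T. -/
/-!
Write `X = F Fᵀ`, where the rows of `F` are the frame vectors; tightness says `Fᵀ F = κ I`.
If `X` lies in an open segment of the elliptope, `Y - X` is a symmetric matrix with zero diagonal
that vanishes on `ker X`; tightness turns it into `F S Fᵀ` with `S` symmetric and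
`vᵢᵀ S vᵢ = 0` for all `i`. For an equiangular tight frame the matrix of squared inner products is
`(1 - α²) I + α² J` with `α² < 1` (frame potential), hence invertible, so the rank-one matrices
`vᵢ vᵢᵀ` are linearly independent. There are `N = r(r+1)/2` of them, so they span the symmetric
matrices and `S = 0`. Finally `rank X = rank F = r > 1`, whereas cut matrices have rank one.
-/

open Matrix

namespace Matrix

def elliptope (ι : Type*) [Fintype ι] : Set (Matrix ι ι ℝ) :=
  {Y | Y.PosSemidef ∧ ∀ i, Y i i = 1}

section Elliptope

variable {ι n : Type*} [Fintype ι] [Fintype n] [DecidableEq n]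

theorem PosSemidef.mulVec_eq_zero_of_mem_openSegment {X Y Z : Matrix ι ι ℝ}
    (hY : Y.PosSemidef) (hZ : Z.PosSemidef) (hX : X ∈ openSegment ℝ Y Z) {u : ι → ℝ}
    (hu : X *ᵥ u = 0) : Y *ᵥ u = 0 := by
  obtain ⟨a, b, ha, hb, -, rfl⟩ := hX
  have hYu := hY.dotProduct_mulVec_nonneg u
  have hZu := hZ.dotProduct_mulVec_nonneg u
  rw [star_trivial] at hYu hZu
  have hsplit : a * (u ⬝ᵥ Y *ᵥ u) + b * (u ⬝ᵥ Z *ᵥ u) = 0 := by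
    simpa [add_mulVec, smul_mulVec, dotProduct_add] using congrArg (u ⬝ᵥ ·) hu
  have hYu0 : a * (u ⬝ᵥ Y *ᵥ u) = 0 := by
    linarith [mul_nonneg ha.le hYu, mul_nonneg hb.le hZu]
  refine (hY.dotProduct_mulVec_zero_iff u).1 ?_
  rw [star_trivial]
  exact (mul_eq_zero.1 hYu0).resolve_left ha.ne'

theorem mul_mul_transpose_eq_smul_of_ker {F : Matrix ι n ℝ} {κ : ℝ} (hF : Fᵀ * F = κ • 1)
    {D : Matrix ι ι ℝ} (hD : ∀ u, Fᵀ *ᵥ u = 0 → D *ᵥ u = 0) : D * (F * Fᵀ) = κ • D := by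
  refine ext_iff_mulVec.2 fun u => ?_
  have hker : Fᵀ *ᵥ (F *ᵥ Fᵀ *ᵥ u - κ • u) = 0 := by
    rw [mulVec_sub, mulVec_mulVec, hF, smul_mulVec, one_mulVec, mulVec_smul, sub_self]
  have := hD _ hker
  rw [mulVec_sub, mulVec_smul, sub_eq_zero, mulVec_mulVec, mulVec_mulVec] at this
  rw [smul_mulVec, ← this, Matrix.mul_assoc]

theorem IsSymm.exists_eq_mul_mul_transpose_of_ker {F : Matrix ι n ℝ} {κ : ℝ} (hκ : κ ≠ 0)
    (hF : Fᵀ * F = κ • 1) {D : Matrix ι ι ℝ} (hDsymm : D.IsSymm)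
    (hD : ∀ u, Fᵀ *ᵥ u = 0 → D *ᵥ u = 0) : ∃ S : Matrix n n ℝ, S.IsSymm ∧ D = F * S * Fᵀ := by
  have hright : D * (F * Fᵀ) = κ • D := mul_mul_transpose_eq_smul_of_ker hF hD
  have hleft : F * Fᵀ * D = κ • D := by
    simpa [transpose_mul, hDsymm.eq] using congrArg (·ᵀ) hright
  have hS : (Fᵀ * D * F).IsSymm := by
    simp [IsSymm, transpose_mul, hDsymm.eq, Matrix.mul_assoc]
  refine ⟨(κ ^ 2)⁻¹ • (Fᵀ * D * F), hS.smul _, ?_⟩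
  have hκ' : (κ ^ 2)⁻¹ * κ * κ = 1 := by field_simp
  calc D = (κ ^ 2)⁻¹ • (F * Fᵀ * D * (F * Fᵀ)) := by
        rw [hleft, smul_mul, hright, smul_smul, smul_smul, hκ', one_smul]
    _ = F * ((κ ^ 2)⁻¹ • (Fᵀ * D * F)) * Fᵀ := by
        simp only [Matrix.mul_smul, Matrix.smul_mul, Matrix.mul_assoc]

/-- The Li–Tam criterion, specialised to Gram matrices of tight frames. -/
theorem mul_transpose_mem_extremePoints_elliptope {F : Matrix ι n ℝ} {κ : ℝ} (hκ : κ ≠ 0)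
    (hF : Fᵀ * F = κ • 1) (hunit : ∀ i, F i ⬝ᵥ F i = 1)
    (hspan : ∀ S : Matrix n n ℝ, S.IsSymm → (F * S * Fᵀ).diag = 0 → S = 0) :
    F * Fᵀ ∈ (elliptope ι).extremePoints ℝ := by
  refine mem_extremePoints_iff_left.2
    ⟨⟨by simpa using posSemidef_self_mul_conjTranspose F, hunit⟩, ?_⟩
  rintro Y ⟨hY, hYdiag⟩ Z ⟨hZ, -⟩ hXYZ
  have hDsymm : (Y - F * Fᵀ).IsSymm :=
    (isHermitian_iff_isSymm.1 hY.isHermitian).sub (by simp [IsSymm, transpose_mul])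
  have hker : ∀ u, Fᵀ *ᵥ u = 0 → (Y - F * Fᵀ) *ᵥ u = 0 := fun u hu => by
    have hXu : (F * Fᵀ) *ᵥ u = 0 := by rw [← mulVec_mulVec, hu, mulVec_zero]
    rw [sub_mulVec, hY.mulVec_eq_zero_of_mem_openSegment hZ hXYZ hXu, hXu, sub_zero]
  obtain ⟨S, hS, hDS⟩ := hDsymm.exists_eq_mul_mul_transpose_of_ker hκ hF hker
  have hdiag : (F * S * Fᵀ).diag = 0 := by
    ext i
    rw [← hDS, diag_apply, sub_apply, hYdiag]
    exact sub_eq_zero.2 (hunit i).symm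
  rw [hspan S hS hdiag, Matrix.mul_zero, Matrix.zero_mul, sub_eq_zero] at hDS
  exact hDS

end Elliptope

section SymmetricMatrices

variable {ι n : Type*}

theorem mul_transpose_apply [Fintype n] (F : Matrix ι n ℝ) (i j : ι) :
    (F * Fᵀ) i j = F i ⬝ᵥ F j :=
  rfl

def sym2ToMatrix (n : Type*) : (Sym2 n → ℝ) →ₗ[ℝ] Matrix n n ℝ where
  toFun f := of fun a b => f s(a, b)
  map_add' f g := by ext; simp
  map_smul' c f := by ext; simp

theorem IsSymm.exists_sym2ToMatrix_eq {S : Matrix n n ℝ} (hS : S.IsSymm) :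
    ∃ f, sym2ToMatrix n f = S :=
  ⟨Sym2.lift ⟨fun a b => S a b, fun a b => hS.apply b a⟩, by ext; simp [sym2ToMatrix]⟩

theorem diag_mul_diagonal_mul_transpose [Fintype n] [DecidableEq n] (A : Matrix ι n ℝ)
    (c : n → ℝ) : (A * diagonal c * Aᵀ).diag = (A ⊙ A) *ᵥ c := by
  ext i
  rw [diag_apply, mul_apply]
  simp only [mul_diagonal, transpose_apply, mulVec, dotProduct, hadamard_apply]
  exact Finset.sum_congr rfl fun _ _ => by ring

/-- `(F Fᵀ) ⊙ (F Fᵀ)` is the Frobenius Gram matrix of the rank-one matrices `F i (F i)ᵀ`, so these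
are linearly independent; being `#(Sym2 n)` in number, they span the symmetric matrices. -/
theorem IsSymm.eq_zero_of_diag_mul_mul_transpose_eq_zero [Fintype ι] [Fintype n] [DecidableEq n]
    {F : Matrix ι n ℝ} (hcard : Fintype.card ι = Fintype.card (Sym2 n))
    (hF : Function.Injective ((F * Fᵀ) ⊙ (F * Fᵀ)).mulVec) {S : Matrix n n ℝ} (hS : S.IsSymm)
    (h0 : (F * S * Fᵀ).diag = 0) : S = 0 := by
  classical
  let L : (Sym2 n → ℝ) →ₗ[ℝ] ι → ℝ :=
    { toFun f := (F * sym2ToMatrix n f * Fᵀ).diag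
      map_add' f g := by simp [Matrix.mul_add, Matrix.add_mul]
      map_smul' c f := by simp }
  have hLsurj : Function.Surjective L := by
    intro y
    obtain ⟨c, rfl⟩ := mulVec_surjective_iff_isUnit.2 (mulVec_injective_iff_isUnit.1 hF) y
    have hsymm : (Fᵀ * diagonal c * F).IsSymm := by
      simp [IsSymm, transpose_mul, Matrix.mul_assoc]
    obtain ⟨f, hf⟩ := hsymm.exists_sym2ToMatrix_eq
    refine ⟨f, ?_⟩
    change (F * sym2ToMatrix n f * Fᵀ).diag = _
    rw [hf, ← diag_mul_diagonal_mul_transpose]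
    simp only [transpose_mul, transpose_transpose, Matrix.mul_assoc]
  have hLinj : Function.Injective L :=
    (LinearMap.injective_iff_surjective_of_finrank_eq_finrank (by simp [hcard])).2 hLsurj
  obtain ⟨f, rfl⟩ := hS.exists_sym2ToMatrix_eq
  rw [hLinj (h0.trans (map_zero L).symm), map_zero]

theorem posDef_of_apply_eq_ite [Fintype ι] [DecidableEq ι] {A : Matrix ι ι ℝ} {β : ℝ}
    (hβ₀ : 0 ≤ β) (hβ₁ : β < 1) (hA : ∀ i j, A i j = if i = j then 1 else β) : A.PosDef := by
  have hA' : A = (1 - β) • (1 : Matrix ι ι ℝ) + β • vecMulVec 1 1 := by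
    ext i j
    rw [hA]
    split_ifs with h <;> simp [h]
  rw [hA']
  exact (PosDef.one.smul (sub_pos.2 hβ₁)).add_posSemidef
    ((posSemidef_vecMulVec_self_star 1).smul hβ₀)

end SymmetricMatrices

section Frames

variable {ι n : Type*} [Fintype ι]

theorem transpose_mul_self_eq_sum_vecMulVec (F : Matrix ι n ℝ) :
    Fᵀ * F = ∑ i, vecMulVec (F i) (F i) := by
  ext a b
  simp [mul_apply, sum_apply, vecMulVec_apply]

variable [Fintype n] [DecidableEq n]

theorem rank_eq_card_width_of_transpose_mul_eq_smul_one {F : Matrix ι n ℝ}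
    {κ : ℝ} (hκ : κ ≠ 0) (hF : Fᵀ * F = κ • 1) : F.rank = Fintype.card n := by
  rw [← rank_transpose_mul_self, hF,
    rank_smul_of_mem_nonZeroDivisors _ (mem_nonZeroDivisors_of_ne_zero hκ), rank_one]

structure IsEquiangularTightFrame (F : Matrix ι n ℝ) (κ α : ℝ) : Prop where
  dotProduct_self : ∀ i, F i ⬝ᵥ F i = 1
  transpose_mul_self : Fᵀ * F = κ • 1
  abs_dotProduct : ∀ i j, i ≠ j → |F i ⬝ᵥ F j| = α

namespace IsEquiangularTightFrame

variable {F : Matrix ι n ℝ} {κ α : ℝ}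

theorem trace_mul_transpose (hF : IsEquiangularTightFrame F κ α) :
    (F * Fᵀ).trace = Fintype.card ι := by
  simp [trace, mul_apply', hF.dotProduct_self]

theorem mul_card_eq (hF : IsEquiangularTightFrame F κ α) :
    κ * Fintype.card n = Fintype.card ι := by
  rw [← hF.trace_mul_transpose, trace_mul_comm, hF.transpose_mul_self, trace_smul, trace_one,
    smul_eq_mul]

theorem frameBound_pos [Nonempty ι] (hF : IsEquiangularTightFrame F κ α) : 0 < κ := by
  refine pos_of_mul_pos_left ?_ (Nat.cast_nonneg (Fintype.card n))
  rw [hF.mul_card_eq]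
  exact_mod_cast Fintype.card_pos

theorem sum_sq_dotProduct (hF : IsEquiangularTightFrame F κ α) (i : ι) :
    ∑ j, (F i ⬝ᵥ F j) ^ 2 = 1 + (Fintype.card ι - 1) * α ^ 2 := by
  classical
  rw [← Finset.add_sum_erase _ _ (Finset.mem_univ i), hF.dotProduct_self, one_pow,
    Finset.sum_congr rfl fun j hj => by
      rw [← sq_abs, hF.abs_dotProduct i j (Finset.ne_of_mem_erase hj).symm],
    Finset.sum_const, Finset.card_erase_of_mem (Finset.mem_univ i), Finset.card_univ,
    nsmul_eq_mul, Nat.cast_pred (Fintype.card_pos_iff.2 ⟨i⟩)]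

/-- The frame potential `tr (X²) = κ tr X` of the Gram matrix `X = F Fᵀ`, evaluated row by row. -/
theorem one_add_mul_sq_eq [Nonempty ι] (hF : IsEquiangularTightFrame F κ α) :
    1 + (Fintype.card ι - 1) * α ^ 2 = κ := by
  have hX2 : (F * Fᵀ) * (F * Fᵀ) = κ • (F * Fᵀ) := by
    rw [Matrix.mul_assoc, ← Matrix.mul_assoc Fᵀ, hF.transpose_mul_self, smul_mul,
      Matrix.one_mul, Matrix.mul_smul]
  have htrace : ((F * Fᵀ) * (F * Fᵀ)).trace =
      Fintype.card ι * (1 + (Fintype.card ι - 1) * α ^ 2) :=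
    calc ((F * Fᵀ) * (F * Fᵀ)).trace = ∑ i, ∑ j, (F i ⬝ᵥ F j) ^ 2 := by
          refine Finset.sum_congr rfl fun i _ => Finset.sum_congr rfl fun j _ => ?_
          change (F * Fᵀ) i j * (F * Fᵀ) j i = _
          rw [mul_transpose_apply, mul_transpose_apply, dotProduct_comm (F j), sq]
      _ = _ := by simp [hF.sum_sq_dotProduct, mul_add]
  rw [hX2, trace_smul, hF.trace_mul_transpose, smul_eq_mul, mul_comm] at htrace
  exact (mul_left_cancel₀ (Nat.cast_ne_zero.2 Fintype.card_ne_zero) htrace).symm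

theorem sq_lt_one [Nonempty ι] (hF : IsEquiangularTightFrame F κ α)
    (hn : 1 < Fintype.card n) : α ^ 2 < 1 := by
  have hκN : κ < Fintype.card ι :=
    hF.mul_card_eq ▸ lt_mul_of_one_lt_right hF.frameBound_pos (by exact_mod_cast hn)
  have hN : (1 : ℝ) ≤ Fintype.card ι := by exact_mod_cast Fintype.card_pos
  by_contra! h
  linarith [hF.one_add_mul_sq_eq, mul_le_mul_of_nonneg_left h (sub_nonneg.2 hN)]

theorem posDef_hadamard_mul_transpose [Nonempty ι] (hF : IsEquiangularTightFrame F κ α)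
    (hn : 1 < Fintype.card n) : ((F * Fᵀ) ⊙ (F * Fᵀ)).PosDef := by
  classical
  refine posDef_of_apply_eq_ite (sq_nonneg α) (hF.sq_lt_one hn) fun i j => ?_
  rw [hadamard_apply, mul_transpose_apply, ← sq]
  split_ifs with h
  · rw [h, hF.dotProduct_self, one_pow]
  · rw [← sq_abs, hF.abs_dotProduct i j h]

theorem mem_extremePoints_elliptope [Nonempty ι] (hF : IsEquiangularTightFrame F κ α)
    (hcard : Fintype.card ι = Fintype.card (Sym2 n)) (hn : 1 < Fintype.card n) :
    F * Fᵀ ∈ (elliptope ι).extremePoints ℝ := by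
  classical
  have hgram : Function.Injective ((F * Fᵀ) ⊙ (F * Fᵀ)).mulVec :=
    mulVec_injective_iff_isUnit.2 (hF.posDef_hadamard_mul_transpose hn).isUnit
  exact mul_transpose_mem_extremePoints_elliptope hF.frameBound_pos.ne' hF.transpose_mul_self
    hF.dotProduct_self fun S hS => hS.eq_zero_of_diag_mul_mul_transpose_eq_zero hcard hgram

theorem rank_mul_transpose [Nonempty ι] (hF : IsEquiangularTightFrame F κ α) :
    (F * Fᵀ).rank = Fintype.card n := by
  rw [rank_self_mul_transpose,
    rank_eq_card_width_of_transpose_mul_eq_smul_one hF.frameBound_pos.ne' hF.transpose_mul_self]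

end IsEquiangularTightFrame

end Frames

end Matrix

/-- The Gram matrix of a maximal equiangular tight frame (`N = r(r+1)/2`, `r > 1`)
is an extreme point of the elliptope of rank `r > 1`; in particular it is not a cut
matrix `x xᵀ`. -/
theorem maximal_etf_extreme_not_cut (N r : ℕ) (hr : 1 < r) (hNr : 2 * N = r * (r + 1))
    (v : Fin N → EuclideanSpace ℝ (Fin r)) (hv : ∀ i, ‖v i‖ = 1)
    (htight : ∑ i, Matrix.vecMulVec (fun a => v i a) (fun a => v i a)
        = ((N : ℝ) / r) • (1 : Matrix (Fin r) (Fin r) ℝ))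
    (α : ℝ) (hang : ∀ i j, i ≠ j → |(inner ℝ (v i) (v j) : ℝ)| = α)
    (X : Matrix (Fin N) (Fin N) ℝ) (hX : ∀ i j, X i j = (inner ℝ (v i) (v j) : ℝ)) :
    X ∈ Set.extremePoints ℝ
        {Y : Matrix (Fin N) (Fin N) ℝ | Y.PosSemidef ∧ ∀ i, Y i i = 1}
      ∧ X.rank = r
      ∧ ¬ ∃ x : Fin N → ℝ, (∀ i, x i = 1 ∨ x i = -1) ∧ X = Matrix.vecMulVec x x := by
  set F : Matrix (Fin N) (Fin r) ℝ := of fun i a => v i a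
  have hinner : ∀ i j, (inner ℝ (v i) (v j) : ℝ) = F i ⬝ᵥ F j := fun i j => by
    rw [EuclideanSpace.inner_eq_star_dotProduct, star_trivial, dotProduct_comm]; rfl
  have hF : F.IsEquiangularTightFrame (N / r) α :=
    { dotProduct_self i := by rw [← hinner, real_inner_self_eq_norm_sq, hv, one_pow]
      transpose_mul_self := (transpose_mul_self_eq_sum_vecMulVec F).trans htight
      abs_dotProduct i j hij := hinner i j ▸ hang i j hij }
  have hFX : X = F * Fᵀ := ext fun i j => (hX i j).trans (hinner i j)
  have hcard : Fintype.card (Fin N) = Fintype.card (Sym2 (Fin r)) := by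
    rw [Sym2.card, Fintype.card_fin, Fintype.card_fin, Nat.choose_two_right, Nat.add_sub_cancel,
      mul_comm, ← hNr]
    omega
  have : Nonempty (Fin N) := ⟨⟨0, by nlinarith⟩⟩
  have hrank : X.rank = r := by rw [hFX, hF.rank_mul_transpose, Fintype.card_fin]
  refine ⟨hFX ▸ hF.mem_extremePoints_elliptope hcard (by simpa using hr), hrank, ?_⟩
  rintro ⟨x, -, rfl⟩
  have := rank_vecMulVec_le x x
  omega
end
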